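/- arXiv:2602.23307 — 17 statements merged into one kernel-verified Lean document; each statement's English description precedes it below -/
import Mathlib

section
/- Let ι be a type and E a type with decidable equality, and let δ_in, δ_out, δ_free : ι → Finset E be such that for every a ∈ ι the sets δ_in(a), δ_out(a), δ_free(a) are pairwise disjoint; set δ(a) := δ_in(a) ∪ δ_out(a) ∪ δ_free(a). Then the Λ=2 master equation — for all a₁, a₂ ∈ ι, |δ(a₁) ∩ δ_in(a₂)| + |δ_out(a₁) ∩ δ(a₂)| ≡ 0 (mod 2) — holds if and only if both: (i) for all a ∈ ι, |δ_in(a)| + |δ_out(a)| ≡ 0 (mod 2), and (ii) for all a₁ ≠ a₂ in ι, |δ_in(a₁) ∩ δ_in(a₂)| + |δ_free(a₁) ∩ δ_in(a₂)| + |δ_out(a₁) ∩ δ_out(a₂)| + |δ_out(a₁) ∩ δ_free(a₂)| ≡ 0 (mod 2). -/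
/-- The Λ=2 master equation for a pre-orientation holds iff the parity condition
and the off-diagonal condition hold. -/
theorem lambda2_master_equation_iff {ι E : Type*} [DecidableEq E]
    (δin δout δfree : ι → Finset E)
    (hio : ∀ a : ι, Disjoint (δin a) (δout a))
    (hif : ∀ a : ι, Disjoint (δin a) (δfree a))
    (hof : ∀ a : ι, Disjoint (δout a) (δfree a)) :
    (∀ a₁ a₂ : ι,
        (((δin a₁ ∪ δout a₁ ∪ δfree a₁) ∩ δin a₂).card
          + (δout a₁ ∩ (δin a₂ ∪ δout a₂ ∪ δfree a₂)).card) % 2 = 0)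
    ↔ ((∀ a : ι, ((δin a).card + (δout a).card) % 2 = 0) ∧
        (∀ a₁ a₂ : ι, a₁ ≠ a₂ →
          ((δin a₁ ∩ δin a₂).card + (δfree a₁ ∩ δin a₂).card
            + (δout a₁ ∩ δout a₂).card + (δout a₁ ∩ δfree a₂).card) % 2 = 0)) := by
  have key : ∀ a₁ a₂ : ι,
      (((δin a₁ ∪ δout a₁ ∪ δfree a₁) ∩ δin a₂).card
        + (δout a₁ ∩ (δin a₂ ∪ δout a₂ ∪ δfree a₂)).card)
      = (δin a₁ ∩ δin a₂).card + (δout a₁ ∩ δin a₂).card + (δfree a₁ ∩ δin a₂).card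
        + ((δout a₁ ∩ δin a₂).card + (δout a₁ ∩ δout a₂).card
          + (δout a₁ ∩ δfree a₂).card) := by
    intro a₁ a₂
    have e1 : (δin a₁ ∪ δout a₁ ∪ δfree a₁) ∩ δin a₂
        = (δin a₁ ∩ δin a₂) ∪ (δout a₁ ∩ δin a₂) ∪ (δfree a₁ ∩ δin a₂) := by
      simp [Finset.union_inter_distrib_right]
    have e2 : δout a₁ ∩ (δin a₂ ∪ δout a₂ ∪ δfree a₂)
        = (δout a₁ ∩ δin a₂) ∪ (δout a₁ ∩ δout a₂) ∪ (δout a₁ ∩ δfree a₂) := by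
      simp [Finset.inter_union_distrib_left]
    have d2 : Disjoint (δin a₁ ∩ δin a₂) (δout a₁ ∩ δin a₂) :=
      (hio a₁).mono Finset.inter_subset_left Finset.inter_subset_left
    have d1 : Disjoint (δin a₁ ∩ δin a₂ ∪ δout a₁ ∩ δin a₂) (δfree a₁ ∩ δin a₂) :=
      Finset.disjoint_union_left.mpr
        ⟨(hif a₁).mono Finset.inter_subset_left Finset.inter_subset_left,
         (hof a₁).mono Finset.inter_subset_left Finset.inter_subset_left⟩
    have d4 : Disjoint (δout a₁ ∩ δin a₂) (δout a₁ ∩ δout a₂) :=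
      (hio a₂).mono Finset.inter_subset_right Finset.inter_subset_right
    have d3 : Disjoint (δout a₁ ∩ δin a₂ ∪ δout a₁ ∩ δout a₂) (δout a₁ ∩ δfree a₂) :=
      Finset.disjoint_union_left.mpr
        ⟨(hif a₂).mono Finset.inter_subset_right Finset.inter_subset_right,
         (hof a₂).mono Finset.inter_subset_right Finset.inter_subset_right⟩
    rw [e1, e2, Finset.card_union_of_disjoint d1, Finset.card_union_of_disjoint d2,
      Finset.card_union_of_disjoint d3, Finset.card_union_of_disjoint d4]
  constructor
  · intro h
    refine ⟨fun a => ?_, fun a₁ a₂ hne => ?_⟩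
    · have := h a a
      rw [key a a] at this
      have h1 : δout a ∩ δin a = ∅ := Finset.disjoint_iff_inter_eq_empty.mp (hio a).symm
      have h2 : δfree a ∩ δin a = ∅ := Finset.disjoint_iff_inter_eq_empty.mp (hif a).symm
      have h3 : δout a ∩ δfree a = ∅ := Finset.disjoint_iff_inter_eq_empty.mp (hof a)
      simp [h1, h2, h3, Finset.inter_self] at this
      omega
    · have := h a₁ a₂
      rw [key a₁ a₂] at this
      omega
  · rintro ⟨h1, h2⟩ a₁ a₂
    rw [key a₁ a₂]
    rcases eq_or_ne a₁ a₂ with rfl | hne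
    · have e1 : δout a₁ ∩ δin a₁ = ∅ := Finset.disjoint_iff_inter_eq_empty.mp (hio a₁).symm
      have e2 : δfree a₁ ∩ δin a₁ = ∅ := Finset.disjoint_iff_inter_eq_empty.mp (hif a₁).symm
      have e3 : δout a₁ ∩ δfree a₁ = ∅ := Finset.disjoint_iff_inter_eq_empty.mp (hof a₁)
      have := h1 a₁
      simp [e1, e2, e3, Finset.inter_self]
      omega
    · have := h2 a₁ a₂ hne
      omega
end

section
/- Let ι be a type and E a type with decidable equality, and let δ_in, δ_out, δ_free : ι → Finset E be such that for every a ∈ ι the sets δ_in(a), δ_out(a), δ_free(a) are pairwise disjoint; set δ(a) := δ_in(a) ∪ δ_out(a) ∪ δ_free(a). Assume the non-overlapping bits condition: for all a₁ ≠ a₂ in ι, δ_in(a₁) ∩ δ_in(a₂) = ∅ and δ_out(a₁) ∩ δ_out(a₂) = ∅. Then the Λ=2 master equation — for all a₁, a₂ ∈ ι, |δ(a₁) ∩ δ_in(a₂)| + |δ_out(a₁) ∩ δ(a₂)| ≡ 0 (mod 2) — holds if and only if both: (i) for all a ∈ ι, |δ_in(a)| + |δ_out(a)| ≡ 0 (mod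 2), and (ii) for all a₁ ≠ a₂ in ι, |δ_out(a₁) ∩ δ_free(a₂)| + |δ_free(a₁) ∩ δ_in(a₂)| ≡ 0 (mod 2). -/
/-- Under the non-overlapping bits condition, the Λ=2 master equation for a
pre-orientation holds iff the parity condition and the simplified off-diagonal
condition hold. -/
theorem lambda2_master_equation_iff_of_nonoverlapping {ι E : Type*} [DecidableEq E]
    (δin δout δfree : ι → Finset E)
    (hio : ∀ a : ι, Disjoint (δin a) (δout a))
    (hif : ∀ a : ι, Disjoint (δin a) (δfree a))
    (hof : ∀ a : ι, Disjoint (δout a) (δfree a))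
    (hno_in : ∀ a₁ a₂ : ι, a₁ ≠ a₂ → δin a₁ ∩ δin a₂ = ∅)
    (hno_out : ∀ a₁ a₂ : ι, a₁ ≠ a₂ → δout a₁ ∩ δout a₂ = ∅) :
    (∀ a₁ a₂ : ι,
        (((δin a₁ ∪ δout a₁ ∪ δfree a₁) ∩ δin a₂).card
          + (δout a₁ ∩ (δin a₂ ∪ δout a₂ ∪ δfree a₂)).card) % 2 = 0)
    ↔ ((∀ a : ι, ((δin a).card + (δout a).card) % 2 = 0) ∧
        (∀ a₁ a₂ : ι, a₁ ≠ a₂ →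
          ((δout a₁ ∩ δfree a₂).card + (δfree a₁ ∩ δin a₂).card) % 2 = 0)) := by
  have hdiag : ∀ a : ι,
      ((δin a ∪ δout a ∪ δfree a) ∩ δin a).card
        + (δout a ∩ (δin a ∪ δout a ∪ δfree a)).card
      = (δin a).card + (δout a).card := by
    intro a
    have h1 : (δin a ∪ δout a ∪ δfree a) ∩ δin a = δin a := by
      apply Finset.inter_eq_right.mpr
      exact (Finset.subset_union_left).trans Finset.subset_union_left
    have h2 : δout a ∩ (δin a ∪ δout a ∪ δfree a) = δout a := by
      apply Finset.inter_eq_left.mpr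
      exact (Finset.subset_union_right).trans Finset.subset_union_left
    rw [h1, h2]
  have hoff : ∀ a₁ a₂ : ι, a₁ ≠ a₂ →
      ((δin a₁ ∪ δout a₁ ∪ δfree a₁) ∩ δin a₂).card
        + (δout a₁ ∩ (δin a₂ ∪ δout a₂ ∪ δfree a₂)).card
      = 2 * (δout a₁ ∩ δin a₂).card
        + ((δout a₁ ∩ δfree a₂).card + (δfree a₁ ∩ δin a₂).card) := by
    intro a₁ a₂ h
    have hA : (δin a₁ ∪ δout a₁ ∪ δfree a₁) ∩ δin a₂
        = (δout a₁ ∩ δin a₂) ∪ (δfree a₁ ∩ δin a₂) := by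
      rw [Finset.union_inter_distrib_right, Finset.union_inter_distrib_right,
        hno_in a₁ a₂ h, Finset.empty_union]
    have hB : δout a₁ ∩ (δin a₂ ∪ δout a₂ ∪ δfree a₂)
        = (δout a₁ ∩ δin a₂) ∪ (δout a₁ ∩ δfree a₂) := by
      rw [Finset.inter_union_distrib_left, Finset.inter_union_distrib_left,
        hno_out a₁ a₂ h, Finset.union_empty]
    rw [hA, hB,
      Finset.card_union_of_disjoint
        ((hof a₁).mono Finset.inter_subset_left Finset.inter_subset_left),
      Finset.card_union_of_disjoint
        ((hif a₂).mono Finset.inter_subset_right Finset.inter_subset_right)]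
    ring
  constructor
  · intro h
    refine ⟨fun a => by have := h a a; rw [hdiag a] at this; exact this,
      fun a₁ a₂ hne => ?_⟩
    have := h a₁ a₂
    rw [hoff a₁ a₂ hne] at this
    omega
  · rintro ⟨h1, h2⟩ a₁ a₂
    by_cases hne : a₁ = a₂
    · subst hne; rw [hdiag a₁]; exact h1 a₁
    · rw [hoff a₁ a₂ hne]
      have := h2 a₁ a₂ hne
      omega
end

section
/- Let ι be a type with decidable equality and E a type with decidable equality, and let δ_in, δ_out, δ_free : ι → Finset E be such that for every a ∈ ι the sets δ_in(a), δ_out(a), δ_free(a) are pairwise disjoint; set δ(a) := δ_in(a) ∪ δ_out(a) ∪ δ_free(a). Then the Λ=3 non-associative master equation — for all a₁, a₂, a₃ ∈ ι, |δ(a₁) ∩ δ_in(a₂) ∩ δ_in(a₃)| + |δ_out(a₁) ∩ δ(a₂) ∩ δ_in(a₃)| + (if a₁ = a₂ then |δ_out(a₁) ∩ δ(a₃)| else 0) ≡ 0 (mod 2) — holds if and only if all of the following hold: (i) for all a, |δ_in(a)| + |δ_out(a)| ≡ 0 (mod 2); (ii) for all a₁ ≠ a₂, |δ_out(a₁) ∩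 δ_out(a₂)| + |δ_out(a₁) ∩ δ_free(a₂)| ≡ 0 (mod 2); (iii) for all a₁ ≠ a₂, |δ_free(a₁) ∩ δ_in(a₂)| ≡ 0 (mod 2); (iv) for all a₁ ≠ a₂, |δ_in(a₁) ∩ δ_in(a₂)| ≡ 0 (mod 2); (v) for all pairwise distinct a₁, a₂, a₃, |δ_in(a₁) ∩ δ_in(a₂) ∩ δ_in(a₃)| + |δ_free(a₁) ∩ δ_in(a₂) ∩ δ_in(a₃)| + |δ_out(a₁) ∩ δ_out(a₂) ∩ δ_in(a₃)| + |δ_out(a₁) ∩ δ_free(a₂) ∩ δ_in(a₃)| ≡ 0 (mod 2). -/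
private lemma union3_inter_inter_card {E : Type*} [DecidableEq E]
    (s t u v w : Finset E)
    (hst : Disjoint s t) (hsu : Disjoint s u) (htu : Disjoint t u) :
    ((s ∪ t ∪ u) ∩ v ∩ w).card
      = (s ∩ v ∩ w).card + (t ∩ v ∩ w).card + (u ∩ v ∩ w).card := by
  have hset : (s ∪ t ∪ u) ∩ v ∩ w = (s ∩ v ∩ w) ∪ (t ∩ v ∩ w) ∪ (u ∩ v ∩ w) := by
    ext x; simp [Finset.mem_inter, Finset.mem_union]; tauto
  have h1 : Disjoint (s ∩ v ∩ w) (t ∩ v ∩ w) :=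
    hst.mono (Finset.inter_subset_left.trans Finset.inter_subset_left)
      (Finset.inter_subset_left.trans Finset.inter_subset_left)
  have h2 : Disjoint (s ∩ v ∩ w ∪ t ∩ v ∩ w) (u ∩ v ∩ w) := by
    refine Finset.disjoint_union_left.mpr ⟨?_, ?_⟩
    · exact hsu.mono (Finset.inter_subset_left.trans Finset.inter_subset_left)
        (Finset.inter_subset_left.trans Finset.inter_subset_left)
    · exact htu.mono (Finset.inter_subset_left.trans Finset.inter_subset_left)
        (Finset.inter_subset_left.trans Finset.inter_subset_left)
  rw [hset, Finset.card_union_of_disjoint h2, Finset.card_union_of_disjoint h1]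

private lemma mid_union3_card {E : Type*} [DecidableEq E]
    (x s t u w : Finset E)
    (hst : Disjoint s t) (hsu : Disjoint s u) (htu : Disjoint t u) :
    (x ∩ (s ∪ t ∪ u) ∩ w).card
      = (x ∩ s ∩ w).card + (x ∩ t ∩ w).card + (x ∩ u ∩ w).card := by
  have hset : x ∩ (s ∪ t ∪ u) ∩ w = (x ∩ s ∩ w) ∪ (x ∩ t ∩ w) ∪ (x ∩ u ∩ w) := by
    ext y; simp [Finset.mem_inter, Finset.mem_union]; tauto
  have h1 : Disjoint (x ∩ s ∩ w) (x ∩ t ∩ w) :=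
    hst.mono (Finset.inter_subset_left.trans Finset.inter_subset_right)
      (Finset.inter_subset_left.trans Finset.inter_subset_right)
  have h2 : Disjoint (x ∩ s ∩ w ∪ x ∩ t ∩ w) (x ∩ u ∩ w) := by
    refine Finset.disjoint_union_left.mpr ⟨?_, ?_⟩
    · exact hsu.mono (Finset.inter_subset_left.trans Finset.inter_subset_right)
        (Finset.inter_subset_left.trans Finset.inter_subset_right)
    · exact htu.mono (Finset.inter_subset_left.trans Finset.inter_subset_right)
        (Finset.inter_subset_left.trans Finset.inter_subset_right)
  rw [hset, Finset.card_union_of_disjoint h2, Finset.card_union_of_disjoint h1]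

private lemma left_union3_card {E : Type*} [DecidableEq E]
    (x s t u : Finset E)
    (hst : Disjoint s t) (hsu : Disjoint s u) (htu : Disjoint t u) :
    (x ∩ (s ∪ t ∪ u)).card = (x ∩ s).card + (x ∩ t).card + (x ∩ u).card := by
  have hset : x ∩ (s ∪ t ∪ u) = (x ∩ s) ∪ (x ∩ t) ∪ (x ∩ u) := by
    ext y; simp [Finset.mem_inter, Finset.mem_union]; tauto
  have h1 : Disjoint (x ∩ s) (x ∩ t) :=
    hst.mono Finset.inter_subset_right Finset.inter_subset_right
  have h2 : Disjoint (x ∩ s ∪ x ∩ t) (x ∩ u) := by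
    refine Finset.disjoint_union_left.mpr ⟨?_, ?_⟩
    · exact hsu.mono Finset.inter_subset_right Finset.inter_subset_right
    · exact htu.mono Finset.inter_subset_right Finset.inter_subset_right
  rw [hset, Finset.card_union_of_disjoint h2, Finset.card_union_of_disjoint h1]

-- zero lemmas
private lemma czero12 {E : Type*} [DecidableEq E] {s t : Finset E} (u : Finset E)
    (h : Disjoint s t) : (s ∩ t ∩ u).card = 0 := by
  rw [Finset.disjoint_iff_inter_eq_empty.mp h, Finset.empty_inter, Finset.card_empty]

private lemma czero13 {E : Type*} [DecidableEq E] {s u : Finset E} (t : Finset E)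
    (h : Disjoint s u) : (s ∩ t ∩ u).card = 0 := by
  have h' : s ∩ t ∩ u = ∅ :=
    Finset.disjoint_iff_inter_eq_empty.mp (h.mono_left Finset.inter_subset_left)
  rw [h', Finset.card_empty]

private lemma czero23 {E : Type*} [DecidableEq E] {t u : Finset E} (s : Finset E)
    (h : Disjoint t u) : (s ∩ t ∩ u).card = 0 := by
  have h' : s ∩ t ∩ u = ∅ :=
    Finset.disjoint_iff_inter_eq_empty.mp (h.mono_left Finset.inter_subset_right)
  rw [h', Finset.card_empty]

private lemma czero2 {E : Type*} [DecidableEq E] {s t : Finset E}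
    (h : Disjoint s t) : (s ∩ t).card = 0 := by
  rw [Finset.disjoint_iff_inter_eq_empty.mp h, Finset.card_empty]

private lemma inter_self_left {E : Type*} [DecidableEq E] (s t : Finset E) :
    s ∩ t ∩ s = s ∩ t := by
  rw [Finset.inter_assoc, Finset.inter_comm t s, ← Finset.inter_assoc, Finset.inter_self]

private lemma inter_self_right {E : Type*} [DecidableEq E] (s t : Finset E) :
    s ∩ t ∩ t = s ∩ t := by
  rw [Finset.inter_assoc, Finset.inter_self]

/-- The Λ=3 non-associative master equation for a pre-orientation holds iff the
five listed conditions hold. -/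
theorem lambda3_nonassociative_master_equation_iff {ι E : Type*}
    [DecidableEq ι] [DecidableEq E]
    (δin δout δfree : ι → Finset E)
    (hio : ∀ a : ι, Disjoint (δin a) (δout a))
    (hif : ∀ a : ι, Disjoint (δin a) (δfree a))
    (hof : ∀ a : ι, Disjoint (δout a) (δfree a)) :
    (∀ a₁ a₂ a₃ : ι,
        (((δin a₁ ∪ δout a₁ ∪ δfree a₁) ∩ δin a₂ ∩ δin a₃).card
          + (δout a₁ ∩ (δin a₂ ∪ δout a₂ ∪ δfree a₂) ∩ δin a₃).card
          + (if a₁ = a₂ then (δout a₁ ∩ (δin a₃ ∪ δout a₃ ∪ δfree a₃)).card else 0)) % 2 = 0)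
    ↔ ((∀ a : ι, ((δin a).card + (δout a).card) % 2 = 0) ∧
        (∀ a₁ a₂ : ι, a₁ ≠ a₂ →
          ((δout a₁ ∩ δout a₂).card + (δout a₁ ∩ δfree a₂).card) % 2 = 0) ∧
        (∀ a₁ a₂ : ι, a₁ ≠ a₂ → (δfree a₁ ∩ δin a₂).card % 2 = 0) ∧
        (∀ a₁ a₂ : ι, a₁ ≠ a₂ → (δin a₁ ∩ δin a₂).card % 2 = 0) ∧
        (∀ a₁ a₂ a₃ : ι, a₁ ≠ a₂ → a₁ ≠ a₃ → a₂ ≠ a₃ →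
          ((δin a₁ ∩ δin a₂ ∩ δin a₃).card + (δfree a₁ ∩ δin a₂ ∩ δin a₃).card
            + (δout a₁ ∩ δout a₂ ∩ δin a₃).card
            + (δout a₁ ∩ δfree a₂ ∩ δin a₃).card) % 2 = 0)) := by
  -- general expansions of the three summands
  have T1 : ∀ a₁ a₂ a₃ : ι,
      ((δin a₁ ∪ δout a₁ ∪ δfree a₁) ∩ δin a₂ ∩ δin a₃).card
        = (δin a₁ ∩ δin a₂ ∩ δin a₃).card + (δout a₁ ∩ δin a₂ ∩ δin a₃).card
          + (δfree a₁ ∩ δin a₂ ∩ δin a₃).card := fun a₁ a₂ a₃ =>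
    union3_inter_inter_card _ _ _ _ _ (hio a₁) (hif a₁) (hof a₁)
  have T2 : ∀ a₁ a₂ a₃ : ι,
      (δout a₁ ∩ (δin a₂ ∪ δout a₂ ∪ δfree a₂) ∩ δin a₃).card
        = (δout a₁ ∩ δin a₂ ∩ δin a₃).card + (δout a₁ ∩ δout a₂ ∩ δin a₃).card
          + (δout a₁ ∩ δfree a₂ ∩ δin a₃).card := fun a₁ a₂ a₃ =>
    mid_union3_card _ _ _ _ _ (hio a₂) (hif a₂) (hof a₂)
  have T3 : ∀ a₁ a₃ : ι,
      (δout a₁ ∩ (δin a₃ ∪ δout a₃ ∪ δfree a₃)).card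
        = (δout a₁ ∩ δin a₃).card + (δout a₁ ∩ δout a₃).card
          + (δout a₁ ∩ δfree a₃).card := fun a₁ a₃ =>
    left_union3_card _ _ _ _ (hio a₃) (hif a₃) (hof a₃)
  -- case computations
  have C1 : ∀ a : ι,
      (((δin a ∪ δout a ∪ δfree a) ∩ δin a ∩ δin a).card
        + (δout a ∩ (δin a ∪ δout a ∪ δfree a) ∩ δin a).card
        + (if a = a then (δout a ∩ (δin a ∪ δout a ∪ δfree a)).card else 0))
      = (δin a).card + (δout a).card := by
    intro a
    rw [if_pos rfl, T1, T2, T3]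
    rw [czero12 _ ((hio a).symm), czero12 _ ((hif a).symm), czero13 _ ((hio a).symm),
      czero12 _ (hof a), Finset.inter_self (δin a), Finset.inter_self (δin a),
      Finset.inter_self (δout a), czero2 ((hio a).symm), czero2 (hof a)]
    omega
  have C2 : ∀ a b : ι,
      (((δin a ∪ δout a ∪ δfree a) ∩ δin a ∩ δin b).card
        + (δout a ∩ (δin a ∪ δout a ∪ δfree a) ∩ δin b).card
        + (if a = a then (δout a ∩ (δin b ∪ δout b ∪ δfree b)).card else 0)) % 2
      = ((δin a ∩ δin b).card + (δout a ∩ δout b).card + (δout a ∩ δfree b).card) % 2 := by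
    intro a b
    rw [if_pos rfl, T1, T2, T3]
    simp only [Finset.inter_self]
    rw [czero12 _ ((hio a).symm), czero12 _ ((hif a).symm), czero12 _ (hof a)]
    omega
  have C3 : ∀ a b : ι, a ≠ b →
      (((δin a ∪ δout a ∪ δfree a) ∩ δin b ∩ δin a).card
        + (δout a ∩ (δin b ∪ δout b ∪ δfree b) ∩ δin a).card
        + (if a = b then (δout a ∩ (δin a ∪ δout a ∪ δfree a)).card else 0)) % 2
      = (δin a ∩ δin b).card % 2 := by
    intro a b hab
    rw [if_neg hab, T1, T2]
    rw [inter_self_left, czero13 _ ((hif a).symm), czero13 _ ((hio a).symm),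
      czero13 _ ((hio a).symm), czero13 _ ((hio a).symm)]
    omega
  have C4 : ∀ a b : ι, b ≠ a →
      (((δin b ∪ δout b ∪ δfree b) ∩ δin a ∩ δin a).card
        + (δout b ∩ (δin a ∪ δout a ∪ δfree a) ∩ δin a).card
        + (if b = a then (δout b ∩ (δin a ∪ δout a ∪ δfree a)).card else 0)) % 2
      = ((δin b ∩ δin a).card + (δfree b ∩ δin a).card) % 2 := by
    intro a b hba
    rw [if_neg hba, T1, T2]
    rw [inter_self_right, inter_self_right, inter_self_right,
      czero23 _ ((hio a).symm), czero23 _ ((hif a).symm)]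
    omega
  have C5 : ∀ a₁ a₂ a₃ : ι, a₁ ≠ a₂ →
      (((δin a₁ ∪ δout a₁ ∪ δfree a₁) ∩ δin a₂ ∩ δin a₃).card
        + (δout a₁ ∩ (δin a₂ ∪ δout a₂ ∪ δfree a₂) ∩ δin a₃).card
        + (if a₁ = a₂ then (δout a₁ ∩ (δin a₃ ∪ δout a₃ ∪ δfree a₃)).card else 0)) % 2
      = ((δin a₁ ∩ δin a₂ ∩ δin a₃).card + (δfree a₁ ∩ δin a₂ ∩ δin a₃).card
          + (δout a₁ ∩ δout a₂ ∩ δin a₃).card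
          + (δout a₁ ∩ δfree a₂ ∩ δin a₃).card) % 2 := by
    intro a₁ a₂ a₃ h
    rw [if_neg h, T1, T2]
    omega
  constructor
  · intro H
    have hiv : ∀ a₁ a₂ : ι, a₁ ≠ a₂ → (δin a₁ ∩ δin a₂).card % 2 = 0 := by
      intro a b hab
      have := H a b a
      rw [C3 a b hab] at this
      exact this
    refine ⟨?_, ?_, ?_, hiv, ?_⟩
    · intro a
      have := H a a a
      rw [C1 a] at this
      exact this
    · intro a b hab
      have := H a a b
      rw [C2 a b] at this
      have h4 := hiv a b hab
      omega
    · intro b a hba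
      have := H b a a
      rw [C4 a b hba] at this
      have h4 := hiv b a hba
      omega
    · intro a₁ a₂ a₃ h12 h13 h23
      have := H a₁ a₂ a₃
      rw [C5 a₁ a₂ a₃ h12] at this
      exact this
  · rintro ⟨h1, h2, h3, h4, h5⟩ a₁ a₂ a₃
    rcases eq_or_ne a₁ a₂ with rfl | h12
    · rcases eq_or_ne a₁ a₃ with rfl | h13
      · rw [C1 a₁]; exact h1 a₁
      · rw [C2 a₁ a₃]
        have := h4 a₁ a₃ h13
        have := h2 a₁ a₃ h13
        omega
    · rcases eq_or_ne a₁ a₃ with rfl | h13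
      · rw [C3 a₁ a₂ h12]
        exact h4 a₁ a₂ h12
      · rcases eq_or_ne a₂ a₃ with rfl | h23
        · rw [C4 a₂ a₁ h12]
          have := h4 a₁ a₂ h12
          have := h3 a₁ a₂ h12
          omega
        · rw [C5 a₁ a₂ a₃ h12]
          exact h5 a₁ a₂ a₃ h12 h13 h23
end

section
/- Let ι be a type and E a type with decidable equality, and let δ_in, δ_out, δ_free : ι → Finset E be such that for every a ∈ ι the sets δ_in(a), δ_out(a), δ_free(a) are pairwise disjoint; set δ(a) := δ_in(a) ∪ δ_out(a) ∪ δ_free(a). Then the Λ=3 symmetric master equation — for all a₁, a₂, a₃ ∈ ι, |δ(a₁) ∩ δ_in(a₂) ∩ δ_in(a₃)| + |δ_out(a₁) ∩ δ(a₂) ∩ δ_in(a₃)| + |δ_out(a₁) ∩ δ_out(a₂) ∩ δ(a₃)| ≡ 0 (mod 2) — holds if and only if all of the following hold: (i) for all a, |δ_in(a)| + |δ_out(a)| ≡ 0 (mod 2); (ii) for all a₁ ≠ a₂, |δ_in(a₁) ∩ δ_in(a₂)| + |δ_out(a₁) ∩ δ_out(a₂)| ≡ 0 (mod 2); (iii)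 for all a₁ ≠ a₂, |δ_out(a₁) ∩ δ_free(a₂)| ≡ 0 (mod 2); (iv) for all a₁ ≠ a₂, |δ_free(a₁) ∩ δ_in(a₂)| ≡ 0 (mod 2); (v) for all pairwise distinct a₁, a₂, a₃, |δ_in(a₁) ∩ δ_in(a₂) ∩ δ_in(a₃)| + |δ_free(a₁) ∩ δ_in(a₂) ∩ δ_in(a₃)| + |δ_out(a₁) ∩ δ_free(a₂) ∩ δ_in(a₃)| + |δ_out(a₁) ∩ δ_out(a₂) ∩ δ_out(a₃)| + |δ_out(a₁) ∩ δ_out(a₂) ∩ δ_free(a₃)| ≡ 0 (mod 2). -/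
open Finset

lemma card_union3_aux {E : Type*} [DecidableEq E] {X Y Z : Finset E}
    (dXY : Disjoint X Y) (dXZ : Disjoint X Z) (dYZ : Disjoint Y Z) :
    (X ∪ Y ∪ Z).card = X.card + Y.card + Z.card := by
  rw [card_union_of_disjoint (by simp [disjoint_union_left, dXZ, dYZ]),
      card_union_of_disjoint dXY]

lemma expand3_aux {E : Type*} [DecidableEq E] (A B C D F G H I J : Finset E)
    (hAB : Disjoint A B) (hAC : Disjoint A C) (hBC : Disjoint B C)
    (hDF : Disjoint D F) (hDG : Disjoint D G) (hFG : Disjoint F G)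
    (hHI : Disjoint H I) (hHJ : Disjoint H J) (hIJ : Disjoint I J) :
    (((A ∪ B ∪ C) ∩ D ∩ H).card + (B ∩ (D ∪ F ∪ G) ∩ H).card
      + (B ∩ F ∩ (H ∪ I ∪ J)).card) % 2
    = ((A ∩ D ∩ H).card + (C ∩ D ∩ H).card + (B ∩ G ∩ H).card
        + (B ∩ F ∩ I).card + (B ∩ F ∩ J).card) % 2 := by
  have e1 : (A ∪ B ∪ C) ∩ D ∩ H = (A ∩ D ∩ H) ∪ (B ∩ D ∩ H) ∪ (C ∩ D ∩ H) := by
    ext x; simp only [mem_inter, mem_union]; tauto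
  have e2 : B ∩ (D ∪ F ∪ G) ∩ H = (B ∩ D ∩ H) ∪ (B ∩ F ∩ H) ∪ (B ∩ G ∩ H) := by
    ext x; simp only [mem_inter, mem_union]; tauto
  have e3 : B ∩ F ∩ (H ∪ I ∪ J) = (B ∩ F ∩ H) ∪ (B ∩ F ∩ I) ∪ (B ∩ F ∩ J) := by
    ext x; simp only [mem_inter, mem_union]; tauto
  have sub1 : ∀ P Q R : Finset E, P ∩ Q ∩ R ⊆ P := fun P Q R =>
    (inter_subset_left).trans inter_subset_left
  have sub2 : ∀ P Q R : Finset E, P ∩ Q ∩ R ⊆ Q := fun P Q R =>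
    (inter_subset_left).trans inter_subset_right
  have sub3 : ∀ P Q R : Finset E, P ∩ Q ∩ R ⊆ R := fun P Q R => inter_subset_right
  rw [e1, e2, e3,
    card_union3_aux (hAB.mono (sub1 _ _ _) (sub1 _ _ _)) (hAC.mono (sub1 _ _ _) (sub1 _ _ _))
      (hBC.mono (sub1 _ _ _) (sub1 _ _ _)),
    card_union3_aux (hDF.mono (sub2 _ _ _) (sub2 _ _ _)) (hDG.mono (sub2 _ _ _) (sub2 _ _ _))
      (hFG.mono (sub2 _ _ _) (sub2 _ _ _)),
    card_union3_aux (hHI.mono (sub3 _ _ _) (sub3 _ _ _)) (hHJ.mono (sub3 _ _ _) (sub3 _ _ _))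
      (hIJ.mono (sub3 _ _ _) (sub3 _ _ _))]
  omega

/-- The Λ=3 symmetric master equation for a pre-orientation holds iff the five
listed conditions hold. -/
theorem lambda3_symmetric_master_equation_iff {ι E : Type*} [DecidableEq E]
    (δin δout δfree : ι → Finset E)
    (hio : ∀ a : ι, Disjoint (δin a) (δout a))
    (hif : ∀ a : ι, Disjoint (δin a) (δfree a))
    (hof : ∀ a : ι, Disjoint (δout a) (δfree a)) :
    (∀ a₁ a₂ a₃ : ι,
        (((δin a₁ ∪ δout a₁ ∪ δfree a₁) ∩ δin a₂ ∩ δin a₃).card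
          + (δout a₁ ∩ (δin a₂ ∪ δout a₂ ∪ δfree a₂) ∩ δin a₃).card
          + (δout a₁ ∩ δout a₂ ∩ (δin a₃ ∪ δout a₃ ∪ δfree a₃)).card) % 2 = 0)
    ↔ ((∀ a : ι, ((δin a).card + (δout a).card) % 2 = 0) ∧
        (∀ a₁ a₂ : ι, a₁ ≠ a₂ →
          ((δin a₁ ∩ δin a₂).card + (δout a₁ ∩ δout a₂).card) % 2 = 0) ∧
        (∀ a₁ a₂ : ι, a₁ ≠ a₂ → (δout a₁ ∩ δfree a₂).card % 2 = 0) ∧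
        (∀ a₁ a₂ : ι, a₁ ≠ a₂ → (δfree a₁ ∩ δin a₂).card % 2 = 0) ∧
        (∀ a₁ a₂ a₃ : ι, a₁ ≠ a₂ → a₁ ≠ a₃ → a₂ ≠ a₃ →
          ((δin a₁ ∩ δin a₂ ∩ δin a₃).card + (δfree a₁ ∩ δin a₂ ∩ δin a₃).card
            + (δout a₁ ∩ δfree a₂ ∩ δin a₃).card
            + (δout a₁ ∩ δout a₂ ∩ δout a₃).card
            + (δout a₁ ∩ δout a₂ ∩ δfree a₃).card) % 2 = 0)) := by
  -- reduce the master expression mod 2 to the five-term sum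
  have key : ∀ a₁ a₂ a₃ : ι,
      (((δin a₁ ∪ δout a₁ ∪ δfree a₁) ∩ δin a₂ ∩ δin a₃).card
        + (δout a₁ ∩ (δin a₂ ∪ δout a₂ ∪ δfree a₂) ∩ δin a₃).card
        + (δout a₁ ∩ δout a₂ ∩ (δin a₃ ∪ δout a₃ ∪ δfree a₃)).card) % 2
      = ((δin a₁ ∩ δin a₂ ∩ δin a₃).card + (δfree a₁ ∩ δin a₂ ∩ δin a₃).card
          + (δout a₁ ∩ δfree a₂ ∩ δin a₃).card
          + (δout a₁ ∩ δout a₂ ∩ δout a₃).card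
          + (δout a₁ ∩ δout a₂ ∩ δfree a₃).card) % 2 := fun a₁ a₂ a₃ =>
    expand3_aux _ _ _ _ _ _ _ _ _ (hio a₁) (hif a₁) (hof a₁)
      (hio a₂) (hif a₂) (hof a₂) (hio a₃) (hif a₃) (hof a₃)
  -- card identities for the specialisations
  have s1 : ∀ a : ι, (δin a ∩ δin a).card = (δin a).card := fun a => by rw [inter_self]
  have s2 : ∀ a : ι, (δout a ∩ δout a).card = (δout a).card := fun a => by rw [inter_self]
  have s3 : ∀ a : ι, (δout a ∩ δfree a).card = 0 := fun a => by
    rw [Finset.disjoint_iff_inter_eq_empty.mp (hof a)]; rfl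
  have c1 : ∀ a b : ι, (δin a ∩ δin a ∩ δin b).card = (δin a ∩ δin b).card :=
    fun a b => by rw [inter_self]
  have c2 : ∀ a b : ι, (δfree a ∩ δin a ∩ δin b).card = 0 := fun a b => by
    rw [Finset.card_eq_zero, Finset.eq_empty_iff_forall_notMem]
    intro x hx; simp only [mem_inter] at hx
    exact Finset.disjoint_left.mp (hif a) hx.1.2 hx.1.1
  have c3 : ∀ a b : ι, (δout a ∩ δfree a ∩ δin b).card = 0 := fun a b => by
    rw [Finset.card_eq_zero, Finset.eq_empty_iff_forall_notMem]
    intro x hx; simp only [mem_inter] at hx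
    exact Finset.disjoint_left.mp (hof a) hx.1.1 hx.1.2
  have c4 : ∀ a b : ι, (δout a ∩ δout a ∩ δout b).card = (δout a ∩ δout b).card :=
    fun a b => by rw [inter_self]
  have c5 : ∀ a b : ι, (δout a ∩ δout a ∩ δfree b).card = (δout a ∩ δfree b).card :=
    fun a b => by rw [inter_self]
  have d1 : ∀ a b : ι, (δin a ∩ δin b ∩ δin a).card = (δin a ∩ δin b).card := fun a b =>
    congrArg Finset.card (by ext x; simp only [mem_inter]; tauto)
  have d2 : ∀ a b : ι, (δfree a ∩ δin b ∩ δin a).card = 0 := fun a b => by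
    rw [Finset.card_eq_zero, Finset.eq_empty_iff_forall_notMem]
    intro x hx; simp only [mem_inter] at hx
    exact Finset.disjoint_left.mp (hif a) hx.2 hx.1.1
  have d3 : ∀ a b : ι, (δout a ∩ δfree b ∩ δin a).card = 0 := fun a b => by
    rw [Finset.card_eq_zero, Finset.eq_empty_iff_forall_notMem]
    intro x hx; simp only [mem_inter] at hx
    exact Finset.disjoint_left.mp (hio a) hx.2 hx.1.1
  have d4 : ∀ a b : ι, (δout a ∩ δout b ∩ δout a).card = (δout a ∩ δout b).card := fun a b =>
    congrArg Finset.card (by ext x; simp only [mem_inter]; tauto)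
  have d5 : ∀ a b : ι, (δout a ∩ δout b ∩ δfree a).card = 0 := fun a b => by
    rw [Finset.card_eq_zero, Finset.eq_empty_iff_forall_notMem]
    intro x hx; simp only [mem_inter] at hx
    exact Finset.disjoint_left.mp (hof a) hx.1.1 hx.2
  have f1 : ∀ a b : ι, (δin a ∩ δin b ∩ δin b).card = (δin a ∩ δin b).card := fun a b =>
    congrArg Finset.card (by ext x; simp only [mem_inter]; tauto)
  have f2 : ∀ a b : ι, (δfree a ∩ δin b ∩ δin b).card = (δfree a ∩ δin b).card := fun a b =>
    congrArg Finset.card (by ext x; simp only [mem_inter]; tauto)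
  have f3 : ∀ a b : ι, (δout a ∩ δfree b ∩ δin b).card = 0 := fun a b => by
    rw [Finset.card_eq_zero, Finset.eq_empty_iff_forall_notMem]
    intro x hx; simp only [mem_inter] at hx
    exact Finset.disjoint_left.mp (hif b) hx.2 hx.1.2
  have f4 : ∀ a b : ι, (δout a ∩ δout b ∩ δout b).card = (δout a ∩ δout b).card := fun a b =>
    congrArg Finset.card (by ext x; simp only [mem_inter]; tauto)
  have f5 : ∀ a b : ι, (δout a ∩ δout b ∩ δfree b).card = 0 := fun a b => by
    rw [Finset.card_eq_zero, Finset.eq_empty_iff_forall_notMem]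
    intro x hx; simp only [mem_inter] at hx
    exact Finset.disjoint_left.mp (hof b) hx.1.2 hx.2
  constructor
  · intro h
    have hS : ∀ a₁ a₂ a₃ : ι,
        ((δin a₁ ∩ δin a₂ ∩ δin a₃).card + (δfree a₁ ∩ δin a₂ ∩ δin a₃).card
          + (δout a₁ ∩ δfree a₂ ∩ δin a₃).card
          + (δout a₁ ∩ δout a₂ ∩ δout a₃).card
          + (δout a₁ ∩ δout a₂ ∩ δfree a₃).card) % 2 = 0 := fun a₁ a₂ a₃ => by
      rw [← key a₁ a₂ a₃]; exact h a₁ a₂ a₃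
    refine ⟨?_, ?_, ?_, ?_, fun a₁ a₂ a₃ _ _ _ => hS a₁ a₂ a₃⟩
    · intro a
      have h0 := hS a a a
      have e1 := c1 a a; have e2 := c2 a a; have e3 := c3 a a
      have e4 := c4 a a; have e5 := c5 a a
      have g1 := s1 a; have g2 := s2 a; have g3 := s3 a
      omega
    · intro a b _
      have h0 := hS a b a
      have e1 := d1 a b; have e2 := d2 a b; have e3 := d3 a b
      have e4 := d4 a b; have e5 := d5 a b
      omega
    · intro a b _
      have h0 := hS a a b
      have hii := hS a b a
      have e1 := c1 a b; have e2 := c2 a b; have e3 := c3 a b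
      have e4 := c4 a b; have e5 := c5 a b
      have e1' := d1 a b; have e2' := d2 a b; have e3' := d3 a b
      have e4' := d4 a b; have e5' := d5 a b
      omega
    · intro a b _
      have h0 := hS a b b
      have hii := hS a b a
      have e1 := f1 a b; have e2 := f2 a b; have e3 := f3 a b
      have e4 := f4 a b; have e5 := f5 a b
      have e1' := d1 a b; have e2' := d2 a b; have e3' := d3 a b
      have e4' := d4 a b; have e5' := d5 a b
      omega
  · rintro ⟨h1, h2, h3, h4, h5⟩ a₁ a₂ a₃
    rw [key a₁ a₂ a₃]
    by_cases e12 : a₁ = a₂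
    · subst e12
      by_cases e13 : a₁ = a₃
      · subst e13
        have e1 := c1 a₁ a₁; have e2 := c2 a₁ a₁; have e3 := c3 a₁ a₁
        have e4 := c4 a₁ a₁; have e5 := c5 a₁ a₁
        have g1 := s1 a₁; have g2 := s2 a₁; have g3 := s3 a₁
        have := h1 a₁
        omega
      · have e1 := c1 a₁ a₃; have e2 := c2 a₁ a₃; have e3 := c3 a₁ a₃
        have e4 := c4 a₁ a₃; have e5 := c5 a₁ a₃
        have g2 := h2 a₁ a₃ e13; have g3 := h3 a₁ a₃ e13
        omega
    · by_cases e13 : a₁ = a₃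
      · subst e13
        have e1 := d1 a₁ a₂; have e2 := d2 a₁ a₂; have e3 := d3 a₁ a₂
        have e4 := d4 a₁ a₂; have e5 := d5 a₁ a₂
        have g2 := h2 a₁ a₂ e12
        omega
      · by_cases e23 : a₂ = a₃
        · subst e23
          have e1 := f1 a₁ a₂; have e2 := f2 a₁ a₂; have e3 := f3 a₁ a₂
          have e4 := f4 a₁ a₂; have e5 := f5 a₁ a₂
          have g2 := h2 a₁ a₂ e12; have g4 := h4 a₁ a₂ e12
          omega
        · exact h5 a₁ a₂ a₃ e12 e13 e23
end

section
/- Let ι be a type and E a type with decidable equality, and let δ_in, δ_out, δ_free : ι → Finset E be such that for every a ∈ ι the sets δ_in(a), δ_out(a), δ_free(a) are pairwise disjoint and moreover δ_free(a) = ∅ for every a; set δ(a) := δ_in(a) ∪ δ_out(a). Then the Λ=3 symmetric master equation — for all a₁, a₂, a₃ ∈ ι, |δ(a₁) ∩ δ_in(a₂) ∩ δ_in(a₃)| + |δ_out(a₁) ∩ δ(a₂) ∩ δ_in(a₃)| + |δ_out(a₁) ∩ δ_out(a₂) ∩ δ(a₃)| ≡ 0 (mod 2) — holds if and only if: (i)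 for all a, |δ_in(a)| + |δ_out(a)| ≡ 0 (mod 2); (ii) for all a₁ ≠ a₂, |δ_in(a₁) ∩ δ_in(a₂)| + |δ_out(a₁) ∩ δ_out(a₂)| ≡ 0 (mod 2); and (iii) for all pairwise distinct a₁, a₂, a₃, |δ_in(a₁) ∩ δ_in(a₂) ∩ δ_in(a₃)| + |δ_out(a₁) ∩ δ_out(a₂) ∩ δ_out(a₃)| ≡ 0 (mod 2). -/
/-- With empty free part, the Λ=3 symmetric master equation for a
pre-orientation holds iff the three listed conditions hold. -/
theorem lambda3_symmetric_master_equation_iff_of_free_empty {ι E : Type*} [DecidableEq E]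
    (δin δout δfree : ι → Finset E)
    (hio : ∀ a : ι, Disjoint (δin a) (δout a))
    (hif : ∀ a : ι, Disjoint (δin a) (δfree a))
    (hof : ∀ a : ι, Disjoint (δout a) (δfree a))
    (hfree : ∀ a : ι, δfree a = ∅) :
    (∀ a₁ a₂ a₃ : ι,
        (((δin a₁ ∪ δout a₁) ∩ δin a₂ ∩ δin a₃).card
          + (δout a₁ ∩ (δin a₂ ∪ δout a₂) ∩ δin a₃).card
          + (δout a₁ ∩ δout a₂ ∩ (δin a₃ ∪ δout a₃)).card) % 2 = 0)
    ↔ ((∀ a : ι, ((δin a).card + (δout a).card) % 2 = 0) ∧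
        (∀ a₁ a₂ : ι, a₁ ≠ a₂ →
          ((δin a₁ ∩ δin a₂).card + (δout a₁ ∩ δout a₂).card) % 2 = 0) ∧
        (∀ a₁ a₂ a₃ : ι, a₁ ≠ a₂ → a₁ ≠ a₃ → a₂ ≠ a₃ →
          ((δin a₁ ∩ δin a₂ ∩ δin a₃).card
            + (δout a₁ ∩ δout a₂ ∩ δout a₃).card) % 2 = 0)) := by
  have key : ∀ a₁ a₂ a₃ : ι,
      (((δin a₁ ∪ δout a₁) ∩ δin a₂ ∩ δin a₃).card
        + (δout a₁ ∩ (δin a₂ ∪ δout a₂) ∩ δin a₃).card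
        + (δout a₁ ∩ δout a₂ ∩ (δin a₃ ∪ δout a₃)).card) % 2
      = ((δin a₁ ∩ δin a₂ ∩ δin a₃).card
        + (δout a₁ ∩ δout a₂ ∩ δout a₃).card) % 2 := by
    intro a₁ a₂ a₃
    have e1 : (δin a₁ ∪ δout a₁) ∩ δin a₂ ∩ δin a₃
        = (δin a₁ ∩ δin a₂ ∩ δin a₃) ∪ (δout a₁ ∩ δin a₂ ∩ δin a₃) := by
      rw [Finset.union_inter_distrib_right, Finset.union_inter_distrib_right]
    have e2 : δout a₁ ∩ (δin a₂ ∪ δout a₂) ∩ δin a₃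
        = (δout a₁ ∩ δin a₂ ∩ δin a₃) ∪ (δout a₁ ∩ δout a₂ ∩ δin a₃) := by
      rw [Finset.inter_union_distrib_left, Finset.union_inter_distrib_right]
    have e3 : δout a₁ ∩ δout a₂ ∩ (δin a₃ ∪ δout a₃)
        = (δout a₁ ∩ δout a₂ ∩ δin a₃) ∪ (δout a₁ ∩ δout a₂ ∩ δout a₃) := by
      rw [Finset.inter_union_distrib_left]
    have d1 : Disjoint (δin a₁ ∩ δin a₂ ∩ δin a₃) (δout a₁ ∩ δin a₂ ∩ δin a₃) :=
      (hio a₁).mono (Finset.inter_subset_left.trans Finset.inter_subset_left)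
        (Finset.inter_subset_left.trans Finset.inter_subset_left)
    have d2 : Disjoint (δout a₁ ∩ δin a₂ ∩ δin a₃) (δout a₁ ∩ δout a₂ ∩ δin a₃) :=
      (hio a₂).mono (Finset.inter_subset_left.trans Finset.inter_subset_right)
        (Finset.inter_subset_left.trans Finset.inter_subset_right)
    have d3 : Disjoint (δout a₁ ∩ δout a₂ ∩ δin a₃) (δout a₁ ∩ δout a₂ ∩ δout a₃) :=
      (hio a₃).mono Finset.inter_subset_right Finset.inter_subset_right
    rw [e1, e2, e3, Finset.card_union_of_disjoint d1, Finset.card_union_of_disjoint d2,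
      Finset.card_union_of_disjoint d3]
    omega
  constructor
  · intro h
    have H : ∀ a₁ a₂ a₃ : ι,
        ((δin a₁ ∩ δin a₂ ∩ δin a₃).card + (δout a₁ ∩ δout a₂ ∩ δout a₃).card) % 2 = 0 :=
      fun a₁ a₂ a₃ => (key a₁ a₂ a₃).symm.trans (h a₁ a₂ a₃)
    refine ⟨fun a => ?_, fun a₁ a₂ _ => ?_, fun a₁ a₂ a₃ _ _ _ => H a₁ a₂ a₃⟩
    · simpa using H a a a
    · simpa [Finset.inter_assoc] using H a₁ a₂ a₂
  · rintro ⟨h1, h2, h3⟩ a₁ a₂ a₃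
    rw [key]
    by_cases h12 : a₁ = a₂
    · subst h12
      by_cases h13 : a₁ = a₃
      · subst h13; simpa using h1 a₁
      · have := h2 a₁ a₃ h13
        simpa [Finset.inter_self] using this
    · by_cases h13 : a₁ = a₃
      · subst h13
        have := h2 a₁ a₂ h12
        simpa [Finset.inter_comm, Finset.inter_assoc, Finset.inter_left_comm, Finset.inter_self] using this
      · by_cases h23 : a₂ = a₃
        · subst h23
          have := h2 a₁ a₂ h12
          simpa [Finset.inter_assoc, Finset.inter_self] using this
        · exact h3 a₁ a₂ a₃ h12 h13 h23
end

section
/- Let ι be a type with decidable equality and E a type with decidable equality, and let δ_in, δ_out, δ_free : ι → Finset E be such that for every a ∈ ι the sets δ_in(a), δ_out(a), δ_free(a) are pairwise disjoint; set δ(a) := δ_in(a) ∪ δ_out(a) ∪ δ_free(a). Assume the non-overlapping bits condition: for all a₁ ≠ a₂, δ_in(a₁) ∩ δ_in(a₂) = ∅ and δ_out(a₁) ∩ δ_out(a₂) = ∅. Then the Λ=3 non-associative master equation — for all a₁, a₂, a₃ ∈ ι, |δ(a₁) ∩ δ_in(a₂) ∩ δ_in(a₃)| + |δ_out(a₁)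 ∩ δ(a₂) ∩ δ_in(a₃)| + (if a₁ = a₂ then |δ_out(a₁) ∩ δ(a₃)| else 0) ≡ 0 (mod 2) — holds if and only if: (i) for all a, |δ_in(a)| + |δ_out(a)| ≡ 0 (mod 2); (ii) for all a₁ ≠ a₂, |δ_out(a₁) ∩ δ_free(a₂)| ≡ 0 (mod 2); (iii) for all a₁ ≠ a₂, |δ_free(a₁) ∩ δ_in(a₂)| ≡ 0 (mod 2); and (iv) for all pairwise distinct a₁, a₂, a₃, |δ_out(a₁) ∩ δ_free(a₂) ∩ δ_in(a₃)| ≡ 0 (mod 2). -/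
/-- Under the non-overlapping bits condition, the Λ=3 non-associative master
equation for a pre-orientation holds iff the four listed conditions hold. -/
theorem lambda3_nonassociative_master_equation_iff_of_nonoverlapping {ι E : Type*}
    [DecidableEq ι] [DecidableEq E]
    (δin δout δfree : ι → Finset E)
    (hio : ∀ a : ι, Disjoint (δin a) (δout a))
    (hif : ∀ a : ι, Disjoint (δin a) (δfree a))
    (hof : ∀ a : ι, Disjoint (δout a) (δfree a))
    (hno_in : ∀ a₁ a₂ : ι, a₁ ≠ a₂ → δin a₁ ∩ δin a₂ = ∅)
    (hno_out : ∀ a₁ a₂ : ι, a₁ ≠ a₂ → δout a₁ ∩ δout a₂ = ∅) :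
    (∀ a₁ a₂ a₃ : ι,
        (((δin a₁ ∪ δout a₁ ∪ δfree a₁) ∩ δin a₂ ∩ δin a₃).card
          + (δout a₁ ∩ (δin a₂ ∪ δout a₂ ∪ δfree a₂) ∩ δin a₃).card
          + (if a₁ = a₂ then (δout a₁ ∩ (δin a₃ ∪ δout a₃ ∪ δfree a₃)).card else 0)) % 2 = 0)
    ↔ ((∀ a : ι, ((δin a).card + (δout a).card) % 2 = 0) ∧
        (∀ a₁ a₂ : ι, a₁ ≠ a₂ → (δout a₁ ∩ δfree a₂).card % 2 = 0) ∧
        (∀ a₁ a₂ : ι, a₁ ≠ a₂ → (δfree a₁ ∩ δin a₂).card % 2 = 0) ∧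
        (∀ a₁ a₂ a₃ : ι, a₁ ≠ a₂ → a₁ ≠ a₃ → a₂ ≠ a₃ →
          (δout a₁ ∩ δfree a₂ ∩ δin a₃).card % 2 = 0)) := by
  -- δout a ∩ δ(a) = δout a
  have hOδ : ∀ a : ι, δout a ∩ (δin a ∪ δout a ∪ δfree a) = δout a := fun a =>
    Finset.inter_eq_left.mpr (fun x hx => by simp [hx])
  -- δ(a) ∩ δin a = δin a
  have hδI_self : ∀ a : ι, (δin a ∪ δout a ∪ δfree a) ∩ δin a = δin a := fun a =>
    Finset.inter_eq_right.mpr (fun x hx => by simp [hx])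
  -- δout a ∩ δin a = ∅
  have hOI : ∀ a : ι, δout a ∩ δin a = ∅ := fun a =>
    Finset.disjoint_iff_inter_eq_empty.mp (hio a).symm
  -- card of δ(a) ∩ δin b for a ≠ b
  have hδI : ∀ a b : ι, a ≠ b →
      ((δin a ∪ δout a ∪ δfree a) ∩ δin b).card
        = (δout a ∩ δin b).card + (δfree a ∩ δin b).card := by
    intro a b hab
    have h1 : (δin a ∪ δout a ∪ δfree a) ∩ δin b
        = (δout a ∩ δin b) ∪ (δfree a ∩ δin b) := by
      rw [Finset.union_inter_distrib_right, Finset.union_inter_distrib_right,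
        hno_in a b hab, Finset.empty_union]
    rw [h1, Finset.card_union_of_disjoint
      (Disjoint.mono Finset.inter_subset_left Finset.inter_subset_left (hof a))]
  -- card of δout a ∩ δ(b) for a ≠ b
  have hOδ' : ∀ a b : ι, a ≠ b →
      (δout a ∩ (δin b ∪ δout b ∪ δfree b)).card
        = (δout a ∩ δin b).card + (δout a ∩ δfree b).card := by
    intro a b hab
    have h1 : δout a ∩ (δin b ∪ δout b ∪ δfree b)
        = (δout a ∩ δin b) ∪ (δout a ∩ δfree b) := by
      rw [Finset.inter_union_distrib_left, Finset.inter_union_distrib_left,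
        hno_out a b hab, Finset.union_empty]
    rw [h1, Finset.card_union_of_disjoint
      (Disjoint.mono Finset.inter_subset_right Finset.inter_subset_right (hif b))]
  -- middle term for pairwise distinct indices
  have hT2 : ∀ a b c : ι, a ≠ b → b ≠ c →
      δout a ∩ (δin b ∪ δout b ∪ δfree b) ∩ δin c = δout a ∩ δfree b ∩ δin c := by
    intro a b c hab hbc
    rw [Finset.inter_union_distrib_left, Finset.inter_union_distrib_left,
      hno_out a b hab, Finset.union_empty, Finset.union_inter_distrib_right,
      Finset.inter_assoc, hno_in b c hbc, Finset.inter_empty, Finset.empty_union]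
  constructor
  · intro H
    refine ⟨?_, ?_, ?_, ?_⟩
    · intro a
      have h := H a a a
      rw [hδI_self a, Finset.inter_self, Finset.inter_assoc, hδI_self a, hOI a,
        if_pos rfl, hOδ a, Finset.card_empty] at h
      omega
    · intro a b hab
      have h := H a a b
      rw [hδI_self a, hno_in a b hab, hOδ a, if_pos rfl, hOδ' a b hab,
        Finset.card_empty] at h
      omega
    · intro a b hab
      have h := H a b b
      rw [Finset.inter_assoc _ (δin b), Finset.inter_self,
        Finset.inter_assoc (δout a), hδI_self b, hδI a b hab, if_neg hab] at h
      omega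
    · intro a b c hab hac hbc
      have h := H a b c
      rw [Finset.inter_assoc _ (δin b), hno_in b c hbc, Finset.inter_empty,
        hT2 a b c hab hbc, if_neg hab, Finset.card_empty] at h
      omega
  · rintro ⟨h1, h2, h3, h4⟩ a b c
    by_cases hab : a = b
    · subst hab
      by_cases hac : a = c
      · subst hac
        rw [hδI_self a, Finset.inter_self, Finset.inter_assoc, hδI_self a, hOI a,
          if_pos rfl, hOδ a, Finset.card_empty]
        have := h1 a
        omega
      · rw [hδI_self a, hno_in a c hac, hOδ a, if_pos rfl, hOδ' a c hac,
          Finset.card_empty]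
        have := h2 a c hac
        omega
    · by_cases hbc : b = c
      · subst hbc
        rw [Finset.inter_assoc _ (δin b), Finset.inter_self,
          Finset.inter_assoc (δout a), hδI_self b, hδI a b hab, if_neg hab]
        have := h3 a b hab
        omega
      · by_cases hac : a = c
        · subst hac
          have hT2' : δout a ∩ (δin b ∪ δout b ∪ δfree b) ∩ δin a = ∅ :=
            Finset.disjoint_iff_inter_eq_empty.mp
              (Disjoint.mono_left Finset.inter_subset_left (hio a).symm)
          rw [Finset.inter_assoc _ (δin b), hno_in b a (fun h => hab h.symm),
            Finset.inter_empty, hT2', if_neg hab]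
          simp
        · rw [Finset.inter_assoc _ (δin b), hno_in b c hbc, Finset.inter_empty,
            hT2 a b c hab hbc, if_neg hab, Finset.card_empty]
          have := h4 a b c hab hac hbc
          omega
end

section
/- Let G be a group and let g₁, g₂, g₃ ∈ G be pairwise distinct. Then there do not exist finite sets S_in, S_out, S_free ⊆ G that are pairwise disjoint with union {g₁, g₂, g₃}, such that S_in and S_out are nonempty, |S_in| + |S_out| ≡ 0 (mod 2), and for all a₁ ≠ a₂ in G the cardinality |(S_free · a₁) ∩ (S_in · a₂)| is even. Consequently, weight-3 group algebra codes do not have a valid pre-orientation satisfying the conditions for the 3-copy-cup gate. -/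
/-- Weight-3 group algebra codes do not have a valid pre-orientation satisfying the
conditions for the 3-copy-cup gate. -/
theorem weight3_no_three_copy_cup_preorientation {G : Type*} [Group G] [DecidableEq G]
    (g₁ g₂ g₃ : G) (h12 : g₁ ≠ g₂) (h13 : g₁ ≠ g₃) (h23 : g₂ ≠ g₃) :
    ¬ ∃ Sin Sout Sfree : Finset G,
        Disjoint Sin Sout ∧ Disjoint Sin Sfree ∧ Disjoint Sout Sfree ∧
        Sin ∪ Sout ∪ Sfree = {g₁, g₂, g₃} ∧
        Sin.Nonempty ∧ Sout.Nonempty ∧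
        (Sin.card + Sout.card) % 2 = 0 ∧
        (∀ a₁ a₂ : G, a₁ ≠ a₂ →
          ((Sfree.image (· * a₁)) ∩ (Sin.image (· * a₂))).card % 2 = 0) := by
  rintro ⟨Sin, Sout, Sfree, hio, hif, hof, hunion, hine, houte, hpar, hcond⟩
  have hcard3 : ({g₁, g₂, g₃} : Finset G).card = 3 := by
    rw [Finset.card_insert_of_notMem (by simp [h12, h13]),
      Finset.card_insert_of_notMem (by simp [h23])]
    rfl
  have hdisj : Disjoint (Sin ∪ Sout) Sfree := Finset.disjoint_union_left.mpr ⟨hif, hof⟩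
  have hsum : Sin.card + Sout.card + Sfree.card = 3 := by
    rw [← Finset.card_union_of_disjoint hio, ← Finset.card_union_of_disjoint hdisj,
      hunion, hcard3]
  have h1 : Sin.card = 1 ∧ Sout.card = 1 ∧ Sfree.card = 1 := by
    have := Finset.card_pos.mpr hine
    have := Finset.card_pos.mpr houte
    omega
  obtain ⟨x, hx⟩ := Finset.card_eq_one.mp h1.1
  obtain ⟨z, hz⟩ := Finset.card_eq_one.mp h1.2.2
  have hxz : x ≠ z := by
    rintro rfl
    exact Finset.disjoint_left.mp hif (hx ▸ Finset.mem_singleton_self x)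
      (hz ▸ Finset.mem_singleton_self x)
  have := hcond (z⁻¹ * x) 1 (by
    intro h
    apply hxz
    have h2 : z * (z⁻¹ * x) = z * 1 := by rw [h]
    simpa [mul_assoc] using h2)
  rw [hx, hz] at this
  simp [mul_assoc] at this
end

section
/- Let G be a group and S, T ⊆ G finite sets. If for all a₁, a₂ ∈ G with a₁ ≠ a₂ the cardinality |(S·a₁) ∩ (T·a₂)| is even, then |S|·|T| − |S ∩ T| is even. In other words, if the number of non-vanishing intersection terms in the expansion of a double-intersection pre-orientation condition is odd, the condition cannot be satisfied. -/
/-- If a double-intersection pre-orientation condition holds for all `a₁ ≠ a₂`, then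
the number `|S|·|T| − |S ∩ T|` of non-vanishing intersection terms in its expansion
is even. -/
theorem double_intersection_condition_even_terms {G : Type*} [Group G] [DecidableEq G]
    (S T : Finset G)
    (h : ∀ a₁ a₂ : G, a₁ ≠ a₂ →
      ((S.image (· * a₁)) ∩ (T.image (· * a₂))).card % 2 = 0) :
    (S.card * T.card - (S ∩ T).card) % 2 = 0 := by
  classical
  set P := S ×ˢ T with hP
  set f : G × G → G := fun p => p.2⁻¹ * p.1 with hf
  -- fiber over g ≠ 1 is even
  have hfib : ∀ g : G, g ≠ 1 → (P.filter (fun p => f p = g)).card % 2 = 0 := by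
    intro g hg
    have h1 := h 1 g (fun e => hg e.symm)
    have hcard : ((S.image (· * 1)) ∩ (T.image (· * g))).card
        = (P.filter (fun p => f p = g)).card := by
      apply Finset.card_bij (fun x _ => (x, x * g⁻¹))
      · intro x hx
        simp only [Finset.mem_inter, Finset.mem_image] at hx
        obtain ⟨⟨s, hs, hs'⟩, ⟨t, ht, ht'⟩⟩ := hx
        simp only [Finset.mem_filter, hP, Finset.mem_product, hf]
        refine ⟨⟨?_, ?_⟩, ?_⟩
        · rw [← hs', mul_one]; exact hs
        · rw [← ht']; simpa using ht
        · group
      · intro a _ b _ hab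
        simpa using congrArg Prod.fst hab
      · intro p hp
        simp only [Finset.mem_filter, hP, Finset.mem_product, hf] at hp
        obtain ⟨⟨hs, ht⟩, hfp⟩ := hp
        refine ⟨p.1, ?_, ?_⟩
        · simp only [Finset.mem_inter, Finset.mem_image]
          refine ⟨⟨p.1, hs, mul_one _⟩, ⟨p.2, ht, ?_⟩⟩
          have : p.1 = p.2 * g := by rw [← hfp]; group
          exact this.symm
        · have : p.1 * g⁻¹ = p.2 := by
            have : p.1 = p.2 * g := by rw [← hfp]; group
            rw [this]; group
          simp [this]
    rwa [hcard] at h1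
  -- fiber over 1 has card (S ∩ T).card
  have hone : (P.filter (fun p => f p = 1)).card = (S ∩ T).card := by
    apply Finset.card_bij (fun p _ => p.1)
    · intro p hp
      simp only [Finset.mem_filter, hP, Finset.mem_product, hf] at hp
      obtain ⟨⟨hs, ht⟩, hfp⟩ := hp
      have : p.2 = p.1 := by
        have := inv_mul_eq_one.mp hfp; exact this
      simp only [Finset.mem_inter]
      exact ⟨hs, this ▸ ht⟩
    · intro a ha b hb hab
      simp only [Finset.mem_filter, hf] at ha hb
      have ha2 : a.2 = a.1 := inv_mul_eq_one.mp ha.2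
      have hb2 : b.2 = b.1 := inv_mul_eq_one.mp hb.2
      exact Prod.ext hab (by rw [ha2, hb2, hab])
    · intro x hx
      simp only [Finset.mem_inter] at hx
      refine ⟨(x, x), ?_, rfl⟩
      simp [hP, hf, Finset.mem_product, hx.1, hx.2]
  -- the complement B
  set B := P.filter (fun p => f p ≠ 1) with hB
  have hsplit : (P.filter (fun p => f p = 1)).card + B.card = P.card :=
    Finset.card_filter_add_card_filter_not _
  have hPcard : P.card = S.card * T.card := Finset.card_product S T
  have hBcard : B.card = S.card * T.card - (S ∩ T).card := by
    omega
  -- B.card is even: partition by f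
  have hBeven : B.card % 2 = 0 := by
    have := Finset.card_eq_sum_card_fiberwise (f := f) (s := B) (t := B.image f)
      (fun x hx => Finset.mem_image_of_mem f hx)
    rw [this, Finset.sum_nat_mod]
    have : ∀ g ∈ B.image f, (B.filter (fun p => f p = g)).card % 2 = 0 := by
      intro g hg
      obtain ⟨p, hp, hpg⟩ := Finset.mem_image.mp hg
      have hg1 : g ≠ 1 := by
        simp only [hB, Finset.mem_filter] at hp
        rw [← hpg]; exact hp.2
      have : B.filter (fun p => f p = g) = P.filter (fun p => f p = g) := by
        ext q
        simp only [hB, Finset.mem_filter, and_assoc]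
        constructor
        · rintro ⟨hq, _, hq2⟩; exact ⟨hq, hq2⟩
        · rintro ⟨hq, hq2⟩; exact ⟨hq, hq2 ▸ hg1, hq2⟩
      rw [this]
      exact hfib g hg1
    rw [Finset.sum_congr rfl this]
    simp
  omega
end

section
/- Let G be a group and let g₁, g₂, g₃, g₄, g₅ ∈ G be pairwise distinct. Then there do not exist finite sets S_in, S_out, S_free ⊆ G that are pairwise disjoint with union {g₁, g₂, g₃, g₄, g₅}, such that S_in and S_out are nonempty, |S_in| + |S_out| ≡ 0 (mod 2), and for all a₁ ≠ a₂ in G the cardinality |(S_free · a₁) ∩ (S_in · a₂)| is even. Consequently, weight-5 group algebra codes do not have a nontrivial pre-orientation satisfying the conditions for either the symmetric or the non-associative 3-copy-cup gate. -/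
/-- Weight-5 group algebra codes do not have a nontrivial pre-orientation satisfying the
conditions for either the symmetric or the non-associative 3-copy-cup gate. -/
theorem weight5_no_three_copy_cup_preorientation {G : Type*} [Group G] [DecidableEq G]
    (g₁ g₂ g₃ g₄ g₅ : G)
    (h12 : g₁ ≠ g₂) (h13 : g₁ ≠ g₃) (h14 : g₁ ≠ g₄) (h15 : g₁ ≠ g₅)
    (h23 : g₂ ≠ g₃) (h24 : g₂ ≠ g₄) (h25 : g₂ ≠ g₅)
    (h34 : g₃ ≠ g₄) (h35 : g₃ ≠ g₅) (h45 : g₄ ≠ g₅) :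
    ¬ ∃ Sin Sout Sfree : Finset G,
        Disjoint Sin Sout ∧ Disjoint Sin Sfree ∧ Disjoint Sout Sfree ∧
        Sin ∪ Sout ∪ Sfree = {g₁, g₂, g₃, g₄, g₅} ∧
        Sin.Nonempty ∧ Sout.Nonempty ∧
        (Sin.card + Sout.card) % 2 = 0 ∧
        (∀ a₁ a₂ : G, a₁ ≠ a₂ →
          ((Sfree.image (· * a₁)) ∩ (Sin.image (· * a₂))).card % 2 = 0) := by
  classical
  rintro ⟨Sin, Sout, Sfree, hio, hif, hof, hU, hne_in, hne_out, hpar, hcond⟩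
  -- double counting: Sfree.card * Sin.card is even
  have key : (Sfree.card * Sin.card) % 2 = 0 := by
    set T := (Sfree ×ˢ Sin).image (fun p => p.1⁻¹ * p.2) with hT
    have hmap : ∀ p ∈ Sfree ×ˢ Sin, (p.1⁻¹ * p.2 : G) ∈ T :=
      fun p hp => Finset.mem_image_of_mem _ hp
    have hcount := Finset.card_eq_sum_card_fiberwise hmap
    rw [Finset.card_product] at hcount
    have hfiber : ∀ a ∈ T,
        ((Sfree ×ˢ Sin).filter (fun p => p.1⁻¹ * p.2 = a)).card
          = ((Sfree.image (· * a)) ∩ (Sin.image (· * (1:G)))).card := by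
      intro a _
      apply Finset.card_bij (fun p _ => p.2)
      · intro p hp
        simp only [Finset.mem_filter, Finset.mem_product] at hp
        simp only [Finset.mem_inter, Finset.mem_image]
        refine ⟨⟨p.1, hp.1.1, ?_⟩, ⟨p.2, hp.1.2, mul_one _⟩⟩
        have := hp.2
        have : p.1 * a = p.2 := by
          rw [← this]; group
        exact this
      · intro p hp q hq hpq
        simp only [Finset.mem_filter, Finset.mem_product] at hp hq
        have h1 : p.1 = q.1 := by
          have e1 : p.1 = p.2 * a⁻¹ := by
            have := hp.2; rw [← this]; group
          have e2 : q.1 = q.2 * a⁻¹ := by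
            have := hq.2; rw [← this]; group
          rw [e1, e2, hpq]
        exact Prod.ext h1 hpq
      · intro x hx
        simp only [Finset.mem_inter, Finset.mem_image] at hx
        obtain ⟨⟨f, hf, hfx⟩, ⟨s, hs, hsx⟩⟩ := hx
        refine ⟨(f, x), ?_, rfl⟩
        simp only [Finset.mem_filter, Finset.mem_product]
        refine ⟨⟨hf, ?_⟩, ?_⟩
        · rw [← hsx] at *; rwa [mul_one]
        · rw [← hfx]; group
    have hne1 : ∀ a ∈ T, a ≠ 1 := by
      intro a ha h1
      rw [hT] at ha
      simp only [Finset.mem_image, Finset.mem_product] at ha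
      obtain ⟨⟨f, s⟩, ⟨hf, hs⟩, heq⟩ := ha
      rw [h1] at heq
      have : f = s := by
        have := inv_mul_eq_one.mp heq
        exact this
      exact (Finset.disjoint_left.mp hif hs (this ▸ hf)).elim
    rw [hcount, Finset.sum_nat_mod]
    have : ∀ a ∈ T, ((Sfree ×ˢ Sin).filter (fun p => p.1⁻¹ * p.2 = a)).card % 2 = 0 := by
      intro a ha
      rw [hfiber a ha]
      exact hcond a 1 (hne1 a ha)
    rw [Finset.sum_congr rfl this]
    simp
  -- card arithmetic
  have h5 : ({g₁, g₂, g₃, g₄, g₅} : Finset G).card = 5 := by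
    rw [Finset.card_insert_of_notMem (by simp [h12, h13, h14, h15]),
        Finset.card_insert_of_notMem (by simp [h23, h24, h25]),
        Finset.card_insert_of_notMem (by simp [h34, h35]),
        Finset.card_insert_of_notMem (by simp [h45]), Finset.card_singleton]
  have hdisj2 : Disjoint (Sin ∪ Sout) Sfree := Finset.disjoint_union_left.mpr ⟨hif, hof⟩
  have hsum : Sin.card + Sout.card + Sfree.card = 5 := by
    rw [← Finset.card_union_of_disjoint hio, ← Finset.card_union_of_disjoint hdisj2, hU, h5]
  have hi1 : 1 ≤ Sin.card := Finset.card_pos.mpr hne_in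
  have ho1 : 1 ≤ Sout.card := Finset.card_pos.mpr hne_out
  -- deduce Sfree.card = 1
  have hf1 : Sfree.card = 1 := by
    have hfodd : Sfree.card % 2 = 1 := by omega
    have hieven : Sin.card % 2 = 0 := by
      have := Nat.mul_mod Sfree.card Sin.card 2
      rw [hfodd] at this
      omega
    omega
  -- singleton contradiction
  obtain ⟨f, hf⟩ := Finset.card_eq_one.mp hf1
  obtain ⟨s, hs⟩ := hne_in
  have hfs : f ≠ s := by
    intro h
    have : f ∈ Sfree := by rw [hf]; exact Finset.mem_singleton_self f
    exact Finset.disjoint_left.mp hif hs (h ▸ this)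
  have hne : (f⁻¹ * s : G) ≠ 1 := by
    intro h
    exact hfs (inv_mul_eq_one.mp h)
  have hc := hcond (f⁻¹ * s) 1 hne
  have hmem : s ∈ (Sfree.image (· * (f⁻¹ * s))) ∩ (Sin.image (· * (1:G))) := by
    simp only [Finset.mem_inter, Finset.mem_image]
    refine ⟨⟨f, ?_, by group⟩, ⟨s, hs, mul_one _⟩⟩
    rw [hf]; exact Finset.mem_singleton_self f
  have hle : ((Sfree.image (· * (f⁻¹ * s))) ∩ (Sin.image (· * (1:G)))).card ≤ 1 := by
    calc ((Sfree.image (· * (f⁻¹ * s))) ∩ (Sin.image (· * (1:G)))).card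
        ≤ (Sfree.image (· * (f⁻¹ * s))).card := Finset.card_le_card Finset.inter_subset_left
      _ ≤ Sfree.card := Finset.card_image_le
      _ = 1 := hf1
  have hge : 1 ≤ ((Sfree.image (· * (f⁻¹ * s))) ∩ (Sin.image (· * (1:G)))).card :=
    Finset.card_pos.mpr ⟨s, hmem⟩
  omega
end

section
/- Let G be a group and let g₁, g₂, g₃, g₄ ∈ G be pairwise distinct. Consider the weight-4 group algebra code with pre-orientation assignment δ_in(a) = {g₁·a}, δ_out(a) = {g₂·a}, δ_free(a) = {g₃·a, g₄·a}. Then the 2-copy-cup condition — for all a₁, a₂ ∈ G, |({g₃·a₁, g₄·a₁}) ∩ {g₁·a₂}| + |{g₂·a₁} ∩ ({g₃·a₂, g₄·a₂})| ≡ 0 (mod 2) — holds if and only if either (g₃⁻¹·g₁ = g₂⁻¹·g₃ and g₄⁻¹·g₁ = g₂⁻¹·g₄) or (g₃⁻¹·g₁ = g₂⁻¹·g₄ and g₄⁻¹·g₁ = g₂⁻¹·g₃). -/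
private lemma card_parity_aux {G : Type*} [DecidableEq G] (x y z u v w : G) :
    ((({x, y} : Finset G) ∩ ({z} : Finset G)).card
      + ((({u} : Finset G)) ∩ ({v, w} : Finset G)).card) % 2 = 0
    ↔ ((z = x ∨ z = y) ↔ (u = v ∨ u = w)) := by
  by_cases hz : z = x ∨ z = y
  · rw [Finset.inter_singleton_of_mem (by simp [hz])]
    by_cases hu : u = v ∨ u = w
    · rw [Finset.singleton_inter_of_mem (by simp [hu])]
      simp [hz, hu]
    · rw [Finset.singleton_inter_of_notMem (by simp; tauto)]
      simp [hz, hu]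
  · rw [Finset.inter_singleton_of_notMem (by simp; tauto)]
    by_cases hu : u = v ∨ u = w
    · rw [Finset.singleton_inter_of_mem (by simp [hu])]
      simp [hz, hu]
    · rw [Finset.singleton_inter_of_notMem (by simp; tauto)]
      simp [hz, hu]

/-- For a weight-4 group algebra code with pre-orientation assignment
`δ_in(a) = {g₁·a}`, `δ_out(a) = {g₂·a}`, `δ_free(a) = {g₃·a, g₄·a}`, the 2-copy-cup
condition holds iff one of the two listed conjunctions of group identities holds. -/
theorem weight4_assignment112_two_copy_cup_iff {G : Type*} [Group G] [DecidableEq G]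
    (g₁ g₂ g₃ g₄ : G)
    (h12 : g₁ ≠ g₂) (h13 : g₁ ≠ g₃) (h14 : g₁ ≠ g₄)
    (h23 : g₂ ≠ g₃) (h24 : g₂ ≠ g₄) (h34 : g₃ ≠ g₄) :
    (∀ a₁ a₂ : G,
        ((({g₃ * a₁, g₄ * a₁} : Finset G) ∩ ({g₁ * a₂} : Finset G)).card
          + ((({g₂ * a₁} : Finset G)) ∩ ({g₃ * a₂, g₄ * a₂} : Finset G)).card) % 2 = 0)
    ↔ ((g₃⁻¹ * g₁ = g₂⁻¹ * g₃ ∧ g₄⁻¹ * g₁ = g₂⁻¹ * g₄) ∨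
        (g₃⁻¹ * g₁ = g₂⁻¹ * g₄ ∧ g₄⁻¹ * g₁ = g₂⁻¹ * g₃)) := by
  have key : (∀ a₁ a₂ : G,
        ((({g₃ * a₁, g₄ * a₁} : Finset G) ∩ ({g₁ * a₂} : Finset G)).card
          + ((({g₂ * a₁} : Finset G)) ∩ ({g₃ * a₂, g₄ * a₂} : Finset G)).card) % 2 = 0)
      ↔ (∀ t : G, (t = g₃⁻¹ * g₁ ∨ t = g₄⁻¹ * g₁) ↔ (t = g₂⁻¹ * g₃ ∨ t = g₂⁻¹ * g₄)) := by
    constructor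
    · intro h t
      have := (card_parity_aux (g₃ * t) (g₄ * t) (g₁ * 1) (g₂ * t) (g₃ * 1) (g₄ * 1)).mp
        (h t 1)
      simp only [mul_one] at this
      constructor
      · intro ht
        rcases (this.mp (by rcases ht with ht | ht <;> [left; right] <;>
            rw [ht, mul_inv_cancel_left])) with h' | h'
        · left; rw [eq_inv_mul_iff_mul_eq, h']
        · right; rw [eq_inv_mul_iff_mul_eq, h']
      · intro ht
        have h2t : g₂ * t = g₃ ∨ g₂ * t = g₄ := by
          rcases ht with ht | ht <;> [left; right] <;> rw [ht, mul_inv_cancel_left]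
        rcases this.mpr h2t with h' | h'
        · left; rw [h', inv_mul_cancel_left]
        · right; rw [h', inv_mul_cancel_left]
    · intro h a₁ a₂
      rw [card_parity_aux]
      have := h (a₁ * a₂⁻¹)
      constructor
      · intro h1
        have : a₁ * a₂⁻¹ = g₂⁻¹ * g₃ ∨ a₁ * a₂⁻¹ = g₂⁻¹ * g₄ := by
          apply this.mp
          rcases h1 with h1 | h1
          · left; rw [eq_inv_mul_iff_mul_eq, ← mul_assoc, ← h1, mul_inv_cancel_right]
          · right; rw [eq_inv_mul_iff_mul_eq, ← mul_assoc, ← h1, mul_inv_cancel_right]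
        rcases this with h' | h'
        · left
          have : g₂ * (a₁ * a₂⁻¹) = g₃ := by rw [h', mul_inv_cancel_left]
          rw [← this]; group
        · right
          have : g₂ * (a₁ * a₂⁻¹) = g₄ := by rw [h', mul_inv_cancel_left]
          rw [← this]; group
      · intro h1
        have h2 : a₁ * a₂⁻¹ = g₂⁻¹ * g₃ ∨ a₁ * a₂⁻¹ = g₂⁻¹ * g₄ := by
          rcases h1 with h1 | h1
          · left; rw [eq_inv_mul_iff_mul_eq, ← mul_assoc, h1, mul_inv_cancel_right]
          · right; rw [eq_inv_mul_iff_mul_eq, ← mul_assoc, h1, mul_inv_cancel_right]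
        rcases this.mpr h2 with h' | h'
        · left
          have : g₃ * (a₁ * a₂⁻¹) = g₁ := by rw [h', mul_inv_cancel_left]
          rw [← this]; group
        · right
          have : g₄ * (a₁ * a₂⁻¹) = g₁ := by rw [h', mul_inv_cancel_left]
          rw [← this]; group
  rw [key]
  constructor
  · intro h
    have h3 := (h (g₃⁻¹ * g₁)).mp (Or.inl rfl)
    have h4 := (h (g₄⁻¹ * g₁)).mp (Or.inr rfl)
    rcases h3 with h3 | h3 <;> rcases h4 with h4 | h4
    · exact absurd (inv_injective (mul_right_cancel (h3.trans h4.symm))) h34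
    · exact Or.inl ⟨h3, h4⟩
    · exact Or.inr ⟨h3, h4⟩
    · exact absurd (inv_injective (mul_right_cancel (h3.trans h4.symm))) h34
  · rintro (⟨h3, h4⟩ | ⟨h3, h4⟩) t <;> constructor
    · rintro (rfl | rfl)
      · exact Or.inl h3
      · exact Or.inr h4
    · rintro (rfl | rfl)
      · exact Or.inl h3.symm
      · exact Or.inr h4.symm
    · rintro (rfl | rfl)
      · exact Or.inr h3
      · exact Or.inl h4
    · rintro (rfl | rfl)
      · exact Or.inr h4.symm
      · exact Or.inl h3.symm
end

section
/- Let G be a group and let g₁, g₂, g₃, g₄ ∈ G be pairwise distinct. Consider the weight-4 group algebra code with pre-orientation assignment δ_in(a) = {g₁·a, g₂·a}, δ_out(a) = {g₃·a, g₄·a}, δ_free(a) = ∅. Then the 2-copy-cup condition — for all a₁ ≠ a₂ in G, |({g₁·a₁, g₂·a₁}) ∩ ({g₁·a₂, g₂·a₂})| + |({g₃·a₁, g₄·a₁}) ∩ ({g₃·a₂, g₄·a₂})| ≡ 0 (mod 2) — holds if and only if g₁⁻¹·g₂ = g₃⁻¹·g₄, or g₁⁻¹·g₂ = g₄⁻¹·g₃,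 or (g₁⁻¹·g₂ = g₂⁻¹·g₁ and g₃⁻¹·g₄ = g₄⁻¹·g₃). -/
private lemma pair_inter_card' {α} [DecidableEq α] {x y z w : α}
    (hxy : x ≠ y) (hxz : x ≠ z) (hyw : y ≠ w) :
    (({x, y} : Finset α) ∩ {z, w}).card
      = (if x = w then 1 else 0) + (if y = z then 1 else 0) := by
  by_cases h1 : x = w <;> by_cases h2 : y = z <;>
    first
    | (subst h1; subst h2
       simp_all [Finset.insert_inter_of_mem, Finset.singleton_inter_of_mem,
         Finset.card_insert_of_notMem, Ne.symm hxy])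
    | (simp_all [Finset.insert_inter_of_mem, Finset.insert_inter_of_notMem,
        Finset.singleton_inter_of_mem, Finset.singleton_inter_of_notMem, Ne.symm])

private lemma pair_inter_card_mul {G : Type*} [Group G] [DecidableEq G]
    {g h : G} (hgh : g ≠ h) {a₁ a₂ : G} (hne : a₁ ≠ a₂) :
    (({g * a₁, h * a₁} : Finset G) ∩ {g * a₂, h * a₂}).card
      = (if a₂ = h⁻¹ * (g * a₁) then 1 else 0) + (if a₂ = g⁻¹ * (h * a₁) then 1 else 0) := by
  rw [pair_inter_card' (by simpa using hgh) (by simpa using hne) (by simpa using hne)]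
  congr 1 <;> apply if_congr _ rfl rfl
  · rw [eq_inv_mul_iff_mul_eq, eq_comm]
  · rw [eq_inv_mul_iff_mul_eq, eq_comm]

private lemma one_ne_inv_mul {G : Type*} [Group G] {g h : G} (hgh : g ≠ h) :
    (1 : G) ≠ g⁻¹ * h := by
  intro hh
  rw [eq_inv_mul_iff_mul_eq, mul_one] at hh
  exact hgh hh

/-- For a weight-4 group algebra code with pre-orientation assignment
`δ_in(a) = {g₁·a, g₂·a}`, `δ_out(a) = {g₃·a, g₄·a}`, `δ_free(a) = ∅`, the 2-copy-cup
condition holds iff one of the three listed group-identity conditions holds. -/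
theorem weight4_assignment220_two_copy_cup_iff {G : Type*} [Group G] [DecidableEq G]
    (g₁ g₂ g₃ g₄ : G)
    (h12 : g₁ ≠ g₂) (h13 : g₁ ≠ g₃) (h14 : g₁ ≠ g₄)
    (h23 : g₂ ≠ g₃) (h24 : g₂ ≠ g₄) (h34 : g₃ ≠ g₄) :
    (∀ a₁ a₂ : G, a₁ ≠ a₂ →
        ((({g₁ * a₁, g₂ * a₁} : Finset G) ∩ ({g₁ * a₂, g₂ * a₂} : Finset G)).card
          + (({g₃ * a₁, g₄ * a₁} : Finset G) ∩ ({g₃ * a₂, g₄ * a₂} : Finset G)).card) % 2 = 0)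
    ↔ (g₁⁻¹ * g₂ = g₃⁻¹ * g₄ ∨ g₁⁻¹ * g₂ = g₄⁻¹ * g₃ ∨
        (g₁⁻¹ * g₂ = g₂⁻¹ * g₁ ∧ g₃⁻¹ * g₄ = g₄⁻¹ * g₃)) := by
  constructor
  · intro H
    by_contra hc
    push_neg at hc
    obtain ⟨h1, h2, h3⟩ := hc
    -- instance a₁ = 1, a₂ = g₁⁻¹ * g₂
    have hneA : (1 : G) ≠ g₁⁻¹ * g₂ := one_ne_inv_mul h12
    have hA := H 1 (g₁⁻¹ * g₂) hneA
    rw [pair_inter_card_mul h12 hneA, pair_inter_card_mul h34 hneA] at hA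
    simp only [mul_one, if_true, eq_self_iff_true] at hA
    rw [if_neg h2, if_neg h1] at hA
    have hu : g₁⁻¹ * g₂ = g₂⁻¹ * g₁ := by
      by_cases hq : g₁⁻¹ * g₂ = g₂⁻¹ * g₁
      · exact hq
      · rw [if_neg hq] at hA; omega
    -- instance a₁ = 1, a₂ = g₃⁻¹ * g₄
    have hneB : (1 : G) ≠ g₃⁻¹ * g₄ := one_ne_inv_mul h34
    have hB := H 1 (g₃⁻¹ * g₄) hneB
    rw [pair_inter_card_mul h12 hneB, pair_inter_card_mul h34 hneB] at hB
    simp only [mul_one, if_true, eq_self_iff_true] at hB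
    have h2' : g₃⁻¹ * g₄ ≠ g₂⁻¹ * g₁ := by
      intro h; apply h2
      have := congrArg Inv.inv h
      simpa [mul_inv_rev] using this.symm
    rw [if_neg h2', if_neg (Ne.symm h1)] at hB
    have hv : g₃⁻¹ * g₄ = g₄⁻¹ * g₃ := by
      by_cases hq : g₃⁻¹ * g₄ = g₄⁻¹ * g₃
      · exact hq
      · rw [if_neg hq] at hB; omega
    exact h3 hu hv
  · intro h a₁ a₂ hne
    rw [pair_inter_card_mul h12 hne, pair_inter_card_mul h34 hne]
    rcases h with h | h | ⟨h, h'⟩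
    · have hinv : g₂⁻¹ * g₁ = g₄⁻¹ * g₃ := by
        have := congrArg Inv.inv h; simpa [mul_inv_rev] using this
      have e1 : g₂⁻¹ * (g₁ * a₁) = g₄⁻¹ * (g₃ * a₁) := by
        rw [← mul_assoc, ← mul_assoc, hinv]
      have e2 : g₁⁻¹ * (g₂ * a₁) = g₃⁻¹ * (g₄ * a₁) := by
        rw [← mul_assoc, ← mul_assoc, h]
      rw [e1, e2]
      split_ifs <;> simp
    · have hinv : g₂⁻¹ * g₁ = g₃⁻¹ * g₄ := by
        have := congrArg Inv.inv h; simpa [mul_inv_rev] using this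
      have e1 : g₂⁻¹ * (g₁ * a₁) = g₃⁻¹ * (g₄ * a₁) := by
        rw [← mul_assoc, ← mul_assoc, hinv]
      have e2 : g₁⁻¹ * (g₂ * a₁) = g₄⁻¹ * (g₃ * a₁) := by
        rw [← mul_assoc, ← mul_assoc, h]
      rw [e1, e2]
      split_ifs <;> simp
    · have e1 : g₂⁻¹ * (g₁ * a₁) = g₁⁻¹ * (g₂ * a₁) := by
        rw [← mul_assoc, ← mul_assoc, ← h]
      have e2 : g₄⁻¹ * (g₃ * a₁) = g₃⁻¹ * (g₄ * a₁) := by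
        rw [← mul_assoc, ← mul_assoc, ← h']
      rw [e1, e2]
      split_ifs <;> simp
end

section
/- Let G be a group and let g₁, g₂, g₃, g₄ ∈ G be pairwise distinct. Consider the weight-4 group algebra code with pre-orientation assignment δ_in(a) = {g₁·a}, δ_out(a) = {g₂·a, g₃·a, g₄·a}, δ_free(a) = ∅. Then the 2-copy-cup condition — for all a₁ ≠ a₂ in G, |({g₂·a₁, g₃·a₁, g₄·a₁}) ∩ ({g₂·a₂, g₃·a₂, g₄·a₂})| ≡ 0 (mod 2) — holds if and only if one of the following four conjunctions holds: (g₂⁻¹g₃ = g₃⁻¹g₂ and g₂⁻¹g₄ = g₄⁻¹g₂ and g₄⁻¹g₃ = g₃⁻¹g₄), or (g₂⁻¹g₃ = g₃⁻¹g₂ and g₂⁻¹g₄ = g₄⁻¹g₃ and g₃⁻¹g₄ = g₄⁻¹g₂), or (g₂⁻¹g₃ = g₃⁻¹g₄ and g₂⁻¹g₄ = g₄⁻¹g₂ and g₃⁻¹g₂ = g₄⁻¹g₃), or (g₂⁻¹g₃ = g₄⁻¹g₂ and g₂⁻¹g₄ = g₃⁻¹g₂ and g₄⁻¹g₃ = g₃⁻¹g₄).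 -/
section aux
variable {G : Type*} [Group G]

private lemma shift1 (x y t : G) : x = y * t ↔ t = y⁻¹ * x := by
  constructor <;> intro h <;> rw [h] <;> group

private lemma shift2 (x y a₁ a₂ : G) : x * a₁ = y * a₂ ↔ a₂ * a₁⁻¹ = y⁻¹ * x := by
  constructor <;> intro h
  · have h2 : a₂ = y⁻¹ * (x * a₁) := by rw [h]; group
    rw [h2]; group
  · have h2 : a₂ = y⁻¹ * x * a₁ := by rw [← h]; group
    rw [h2]; group

private lemma card_inter3 {α : Type*} [DecidableEq α] (x1 x2 x3 : α)
    (h12 : x1 ≠ x2) (h13 : x1 ≠ x3) (h23 : x2 ≠ x3) (Y : Finset α) :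
    (({x1, x2, x3} : Finset α) ∩ Y).card
      = (if x1 ∈ Y then 1 else 0) + (if x2 ∈ Y then 1 else 0) + (if x3 ∈ Y then 1 else 0) := by
  classical
  rw [← Finset.filter_mem_eq_inter, Finset.card_filter]
  rw [show ({x1, x2, x3} : Finset α) = insert x1 (insert x2 {x3}) from rfl]
  rw [Finset.sum_insert (by simp [h12, h13]), Finset.sum_insert (by simp [h23]),
    Finset.sum_singleton]
  omega

private lemma reform [DecidableEq G] (g₂ g₃ g₄ : G)
    (h23 : g₂ ≠ g₃) (h24 : g₂ ≠ g₄) (h34 : g₃ ≠ g₄) :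
    (∀ a₁ a₂ : G, a₁ ≠ a₂ →
        (({g₂ * a₁, g₃ * a₁, g₄ * a₁} : Finset G)
          ∩ ({g₂ * a₂, g₃ * a₂, g₄ * a₂} : Finset G)).card % 2 = 0)
    ↔ (∀ t : G, t ≠ 1 →
        ((if (t = g₃⁻¹ * g₂ ∨ t = g₄⁻¹ * g₂) then 1 else 0)
          + (if (t = g₂⁻¹ * g₃ ∨ t = g₄⁻¹ * g₃) then 1 else 0)
          + (if (t = g₂⁻¹ * g₄ ∨ t = g₃⁻¹ * g₄) then 1 else 0)) % 2 = 0) := by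
  constructor
  · intro H t ht
    have h := H 1 t (Ne.symm ht)
    rw [card_inter3 _ _ _ (by simp [h23]) (by simp [h24]) (by simp [h34])] at h
    have e2 : (g₂ * 1 ∈ ({g₂ * t, g₃ * t, g₄ * t} : Finset G))
        ↔ (t = g₃⁻¹ * g₂ ∨ t = g₄⁻¹ * g₂) := by
      rw [Finset.mem_insert, Finset.mem_insert, Finset.mem_singleton, mul_one,
        shift1 g₂ g₂ t, shift1 g₂ g₃ t, shift1 g₂ g₄ t]
      simp [ht]
    have e3 : (g₃ * 1 ∈ ({g₂ * t, g₃ * t, g₄ * t} : Finset G))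
        ↔ (t = g₂⁻¹ * g₃ ∨ t = g₄⁻¹ * g₃) := by
      rw [Finset.mem_insert, Finset.mem_insert, Finset.mem_singleton, mul_one,
        shift1 g₃ g₂ t, shift1 g₃ g₃ t, shift1 g₃ g₄ t]
      have hne : ¬ (t = (1:G)) := ht
      simp only [inv_mul_cancel]
      simp [hne]
    have e4 : (g₄ * 1 ∈ ({g₂ * t, g₃ * t, g₄ * t} : Finset G))
        ↔ (t = g₂⁻¹ * g₄ ∨ t = g₃⁻¹ * g₄) := by
      rw [Finset.mem_insert, Finset.mem_insert, Finset.mem_singleton, mul_one,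
        shift1 g₄ g₂ t, shift1 g₄ g₃ t, shift1 g₄ g₄ t]
      have hne : ¬ (t = (1:G)) := ht
      simp only [inv_mul_cancel]
      simp [hne]
    rw [if_congr e2 rfl rfl, if_congr e3 rfl rfl, if_congr e4 rfl rfl] at h
    exact h
  · intro H a₁ a₂ hne
    have ht : a₂ * a₁⁻¹ ≠ 1 := by
      intro h
      exact hne (by rw [← mul_inv_eq_one.mp h])
    have h := H (a₂ * a₁⁻¹) ht
    rw [card_inter3 _ _ _ (by simp [h23]) (by simp [h24]) (by simp [h34])]
    have e2 : (g₂ * a₁ ∈ ({g₂ * a₂, g₃ * a₂, g₄ * a₂} : Finset G))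
        ↔ (a₂ * a₁⁻¹ = g₃⁻¹ * g₂ ∨ a₂ * a₁⁻¹ = g₄⁻¹ * g₂) := by
      rw [Finset.mem_insert, Finset.mem_insert, Finset.mem_singleton,
        shift2 g₂ g₂ a₁ a₂, shift2 g₂ g₃ a₁ a₂, shift2 g₂ g₄ a₁ a₂]
      have hne : ¬ (a₂ * a₁⁻¹ = (1:G)) := ht
      simp only [inv_mul_cancel]
      simp [hne]
    have e3 : (g₃ * a₁ ∈ ({g₂ * a₂, g₃ * a₂, g₄ * a₂} : Finset G))
        ↔ (a₂ * a₁⁻¹ = g₂⁻¹ * g₃ ∨ a₂ * a₁⁻¹ = g₄⁻¹ * g₃) := by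
      rw [Finset.mem_insert, Finset.mem_insert, Finset.mem_singleton,
        shift2 g₃ g₂ a₁ a₂, shift2 g₃ g₃ a₁ a₂, shift2 g₃ g₄ a₁ a₂]
      have hne : ¬ (a₂ * a₁⁻¹ = (1:G)) := ht
      simp only [inv_mul_cancel]
      simp [hne]
    have e4 : (g₄ * a₁ ∈ ({g₂ * a₂, g₃ * a₂, g₄ * a₂} : Finset G))
        ↔ (a₂ * a₁⁻¹ = g₂⁻¹ * g₄ ∨ a₂ * a₁⁻¹ = g₃⁻¹ * g₄) := by
      rw [Finset.mem_insert, Finset.mem_insert, Finset.mem_singleton,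
        shift2 g₄ g₂ a₁ a₂, shift2 g₄ g₃ a₁ a₂, shift2 g₄ g₄ a₁ a₂]
      have hne : ¬ (a₂ * a₁⁻¹ = (1:G)) := ht
      simp only [inv_mul_cancel]
      simp [hne]
    rw [if_congr e2 rfl rfl, if_congr e3 rfl rfl, if_congr e4 rfl rfl]
    exact h

end aux

private lemma parity3 {p q r : Prop} [Decidable p] [Decidable q] [Decidable r]
    (h0 : ¬(p ∧ q ∧ r)) (h1 : p → q ∨ r) (h2 : q → p ∨ r) (h3 : r → p ∨ q) :
    ((if p then 1 else 0) + (if q then 1 else 0) + (if r then 1 else 0)) % 2 = 0 := by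
  by_cases hp : p <;> by_cases hq : q <;> by_cases hr : r <;>
    simp [hp, hq, hr] <;> tauto

private lemma parity3_mid {p q r : Prop} [Decidable p] [Decidable q] [Decidable r]
    (hq : q)
    (h : ((if p then 1 else 0) + (if q then 1 else 0) + (if r then 1 else 0)) % 2 = 0) :
    (p ∧ ¬r) ∨ (¬p ∧ r) := by
  by_cases hp : p <;> by_cases hr : r <;> simp [hp, hq, hr] at h <;> tauto

private lemma parity3_last {p q r : Prop} [Decidable p] [Decidable q] [Decidable r]
    (hr : r)
    (h : ((if p then 1 else 0) + (if q then 1 else 0) + (if r then 1 else 0)) % 2 = 0) :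
    (p ∧ ¬q) ∨ (¬p ∧ q) := by
  by_cases hp : p <;> by_cases hq : q <;> simp [hp, hq, hr] at h <;> tauto

/-- For a weight-4 group algebra code with pre-orientation assignment
`δ_in(a) = {g₁·a}`, `δ_out(a) = {g₂·a, g₃·a, g₄·a}`, `δ_free(a) = ∅`, the 2-copy-cup
condition holds iff one of the four listed conjunctions of group identities holds. -/
theorem weight4_assignment130_two_copy_cup_iff {G : Type*} [Group G] [DecidableEq G]
    (g₁ g₂ g₃ g₄ : G)
    (h12 : g₁ ≠ g₂) (h13 : g₁ ≠ g₃) (h14 : g₁ ≠ g₄)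
    (h23 : g₂ ≠ g₃) (h24 : g₂ ≠ g₄) (h34 : g₃ ≠ g₄) :
    (∀ a₁ a₂ : G, a₁ ≠ a₂ →
        (({g₂ * a₁, g₃ * a₁, g₄ * a₁} : Finset G)
          ∩ ({g₂ * a₂, g₃ * a₂, g₄ * a₂} : Finset G)).card % 2 = 0)
    ↔ ((g₂⁻¹ * g₃ = g₃⁻¹ * g₂ ∧ g₂⁻¹ * g₄ = g₄⁻¹ * g₂ ∧ g₄⁻¹ * g₃ = g₃⁻¹ * g₄) ∨
        (g₂⁻¹ * g₃ = g₃⁻¹ * g₂ ∧ g₂⁻¹ * g₄ = g₄⁻¹ * g₃ ∧ g₃⁻¹ * g₄ = g₄⁻¹ * g₂) ∨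
        (g₂⁻¹ * g₃ = g₃⁻¹ * g₄ ∧ g₂⁻¹ * g₄ = g₄⁻¹ * g₂ ∧ g₃⁻¹ * g₂ = g₄⁻¹ * g₃) ∨
        (g₂⁻¹ * g₃ = g₄⁻¹ * g₂ ∧ g₂⁻¹ * g₄ = g₃⁻¹ * g₂ ∧ g₄⁻¹ * g₃ = g₃⁻¹ * g₄)) := by
  have cL : ∀ {x y z : G}, x⁻¹ * y = x⁻¹ * z → y = z := fun h => mul_left_cancel h
  have cR : ∀ {x y z : G}, x⁻¹ * z = y⁻¹ * z → x = y :=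
    fun h => inv_injective (mul_right_cancel h)
  have iflip : ∀ {x y z w : G}, x⁻¹ * y = z⁻¹ * w → y⁻¹ * x = w⁻¹ * z := by
    intro x y z w h
    have h2 := congrArg (fun u : G => u⁻¹) h
    simpa [mul_inv_rev] using h2
  have nab : g₂⁻¹ * g₃ ≠ g₂⁻¹ * g₄ := fun h => h34 (cL h)
  have nac : g₂⁻¹ * g₃ ≠ g₄⁻¹ * g₃ := fun h => h24 (cR h)
  have nbc' : g₂⁻¹ * g₄ ≠ g₃⁻¹ * g₄ := fun h => h23 (cR h)
  have na'b' : g₃⁻¹ * g₂ ≠ g₄⁻¹ * g₂ := fun h => h34 (cR h)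
  have na'c' : g₃⁻¹ * g₂ ≠ g₃⁻¹ * g₄ := fun h => h24 (cL h)
  have nb'c : g₄⁻¹ * g₂ ≠ g₄⁻¹ * g₃ := fun h => h23 (cL h)
  rw [reform g₂ g₃ g₄ h23 h24 h34]
  constructor
  · intro H
    have neA : (g₂⁻¹ * g₃ : G) ≠ 1 := fun h => h23 (inv_mul_eq_one.mp h)
    have neB : (g₂⁻¹ * g₄ : G) ≠ 1 := fun h => h24 (inv_mul_eq_one.mp h)
    have neC : (g₃⁻¹ * g₄ : G) ≠ 1 := fun h => h34 (inv_mul_eq_one.mp h)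
    have XA := parity3_mid (Or.inl rfl) (H (g₂⁻¹ * g₃) neA)
    have XB := parity3_last (Or.inl rfl) (H (g₂⁻¹ * g₄) neB)
    have XC := parity3_last (Or.inr rfl) (H (g₃⁻¹ * g₄) neC)
    rcases XA with ⟨hA, hnC⟩ | ⟨hnA, hC⟩
    · rw [not_or] at hnC
      obtain ⟨hnC1, hnC2⟩ := hnC
      rcases hA with ha | ha
      · -- a = a'
        rcases XB with ⟨hb', hnBb⟩ | ⟨hnAb, hb⟩
        · rcases hb' with hb | hb
          · exact absurd (ha.trans hb.symm) nab
          · -- b = b'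
            rcases XC with ⟨hc', _⟩ | ⟨_, hc⟩
            · rcases hc' with hc | hc
              · exact absurd (ha.trans hc.symm) hnC2
              · exact absurd (hb.trans hc.symm) nbc'
            · rcases hc with hc | hc
              · exact absurd hc.symm hnC2
              · exact Or.inl ⟨ha, hb, hc.symm⟩
        · rw [not_or] at hnAb
          rcases hb with hb | hb
          · exact absurd hb.symm nab
          · -- b = c
            rcases XC with ⟨hc', _⟩ | ⟨_, hc⟩
            · rcases hc' with hc | hc
              · exact absurd (ha.trans hc.symm) hnC2
              · exact Or.inr (Or.inl ⟨ha, hb, hc⟩)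
            · rcases hc with hc | hc
              · exact absurd hc.symm hnC2
              · exact absurd (hb.trans hc.symm) nbc'
      · -- a = b'
        rcases XB with ⟨hb', hnBb⟩ | ⟨hnAb, hb⟩
        · rcases hb' with hb | hb
          · -- b = a'
            rcases XC with ⟨hc', _⟩ | ⟨_, hc⟩
            · rcases hc' with hc | hc
              · exact absurd (hb.trans hc.symm) nbc'
              · exact absurd (ha.trans hc.symm) hnC2
            · rcases hc with hc | hc
              · exact absurd hc.symm hnC2
              · exact Or.inr (Or.inr (Or.inr ⟨ha, hb, hc.symm⟩))
          · exact absurd (ha.trans hb.symm) nab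
        · rw [not_or] at hnAb
          rcases hb with hb | hb
          · exact absurd hb.symm nab
          · exact absurd (iflip ha).symm hnAb.1
    · rw [not_or] at hnA
      obtain ⟨hnA1, hnA2⟩ := hnA
      rcases hC with hc0 | hc0
      · exact absurd hc0 nab
      · -- a = c'
        rcases XB with ⟨hb', hnBb⟩ | ⟨hnAb, hb⟩
        · rcases hb' with hb | hb
          · exact absurd (iflip hb).symm hnA2
          · exact Or.inr (Or.inr (Or.inl ⟨hc0, hb, iflip hc0⟩))
        · rcases hb with hb | hb
          · exact absurd hb.symm nab
          · exact absurd (hc0.trans (iflip hb).symm) hnA2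
  · rintro (⟨d1, d2, d3⟩ | ⟨d1, d2, d3⟩ | ⟨d1, d2, d3⟩ | ⟨d1, d2, d3⟩) t ht
    -- D1 : a=a', b=b', c=c'
    · refine parity3 ?_ ?_ ?_ ?_
      · rintro ⟨h1 | h1, h2 | h2, h3 | h3⟩
        · exact nab (h2.symm.trans h3)
        · exact na'c' (d1.symm.trans (h2.symm.trans h3))
        · exact nb'c (d2.symm.trans (h3.symm.trans h2))
        · exact na'c' (d1.symm.trans (iflip (h1.symm.trans h2)))
        · exact na'b' (d1.symm.trans (h2.symm.trans h1))
        · exact na'c' (d1.symm.trans (h2.symm.trans h3))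
        · exact nb'c (d2.symm.trans (h3.symm.trans h2))
        · exact nb'c (d2.symm.trans (iflip (h1.symm.trans h3)))
      · rintro (h1 | h1)
        · exact Or.inl (Or.inl (h1.trans d1.symm))
        · exact Or.inr (Or.inl (h1.trans d2.symm))
      · rintro (h2 | h2)
        · exact Or.inl (Or.inl (h2.trans d1))
        · exact Or.inr (Or.inr (h2.trans d3))
      · rintro (h3 | h3)
        · exact Or.inl (Or.inr (h3.trans d2))
        · exact Or.inr (Or.inr (h3.trans d3.symm))
    -- D2 : a=a', b=c, c'=b'
    · refine parity3 ?_ ?_ ?_ ?_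
      · rintro ⟨h1 | h1, h2 | h2, h3 | h3⟩
        · exact nab (h2.symm.trans h3)
        · exact na'c' (d1.symm.trans (h2.symm.trans h3))
        · exact na'c' (d1.symm.trans (iflip (h1.symm.trans h2)))
        · exact nbc' (d2.trans (h2.symm.trans h3))
        · exact na'b' (d1.symm.trans (h2.symm.trans h1))
        · exact na'c' (d1.symm.trans (h2.symm.trans h3))
        · exact nb'c ((h3.symm.trans h1).symm.trans d2)
        · exact nbc' (d2.trans (h2.symm.trans h3))
      · rintro (h1 | h1)
        · exact Or.inl (Or.inl (h1.trans d1.symm))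
        · exact Or.inr (Or.inr (h1.trans d3.symm))
      · rintro (h2 | h2)
        · exact Or.inl (Or.inl (h2.trans d1))
        · exact Or.inr (Or.inl (h2.trans d2.symm))
      · rintro (h3 | h3)
        · exact Or.inr (Or.inr (h3.trans d2))
        · exact Or.inl (Or.inr (h3.trans d3))
    -- D3 : a=c', b=b', a'=c
    · refine parity3 ?_ ?_ ?_ ?_
      · rintro ⟨h1 | h1, h2 | h2, h3 | h3⟩
        · exact nab (h2.symm.trans h3)
        · exact na'c' ((h2.symm.trans h1).symm.trans d1)
        · exact nb'c (d2.symm.trans (h3.symm.trans h2))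
        · exact na'c' (d3.trans (h2.symm.trans h3))
        · exact nab (h2.symm.trans h3)
        · exact na'b' ((iflip (h2.symm.trans h1)).trans d2)
        · exact nb'c (d2.symm.trans (h3.symm.trans h2))
        · exact na'c' (d3.trans (h2.symm.trans h3))
      · rintro (h1 | h1)
        · exact Or.inl (Or.inr (h1.trans d3))
        · exact Or.inr (Or.inl (h1.trans d2.symm))
      · rintro (h2 | h2)
        · exact Or.inr (Or.inr (h2.trans d1))
        · exact Or.inl (Or.inl (h2.trans d3.symm))
      · rintro (h3 | h3)
        · exact Or.inl (Or.inr (h3.trans d2))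
        · exact Or.inr (Or.inl (h3.trans d1.symm))
    -- D4 : a=b', b=a', c=c'
    · refine parity3 ?_ ?_ ?_ ?_
      · rintro ⟨h1 | h1, h2 | h2, h3 | h3⟩
        · exact na'b' ((h2.symm.trans h1).symm.trans d1)
        · exact na'b' ((h2.symm.trans h1).symm.trans d1)
        · exact nbc' (h3.symm.trans (h2.trans d3))
        · exact nbc' ((d2.trans (h1.symm.trans h2)).trans d3)
        · exact na'b' (d2.symm.trans (h3.symm.trans h1))
        · exact nbc' ((d2.trans (iflip (h2.symm.trans h3))).trans d3)
        · exact na'b' (d2.symm.trans (h3.symm.trans h1))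
        · exact nb'c (h1.symm.trans h2)
      · rintro (h1 | h1)
        · exact Or.inr (Or.inl (h1.trans d2.symm))
        · exact Or.inl (Or.inl (h1.trans d1.symm))
      · rintro (h2 | h2)
        · exact Or.inl (Or.inr (h2.trans d1))
        · exact Or.inr (Or.inr (h2.trans d3))
      · rintro (h3 | h3)
        · exact Or.inl (Or.inl (h3.trans d2))
        · exact Or.inr (Or.inr (h3.trans d3.symm))
end

section
/- Let G be a group and let g₁, g₂, g₃, g₄ ∈ G be pairwise distinct. Consider the weight-4 group algebra code with pre-orientation assignment δ_in(a) = {g₁·a, g₂·a}, δ_out(a) = {g₃·a, g₄·a}, δ_free(a) = ∅. Then the non-associative 3-copy-cup conditions — namely (i) for all a₁ ≠ a₂ in G, |({g₁·a₁, g₂·a₁}) ∩ ({g₁·a₂, g₂·a₂})| ≡ 0 (mod 2); (ii) for all a₁ ≠ a₂, |({g₃·a₁, g₄·a₁}) ∩ ({g₃·a₂, g₄·a₂})| ≡ 0 (mod 2); and (iii) for all pairwise distinct a₁, a₂, a₃, |({g₃·a₁, g₄·a₁}) ∩ ({g₃·a₂, g₄·a₂}) ∩ ({g₁·a₃, g₂·a₃})|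 ≡ 0 (mod 2) — hold if and only if g₁⁻¹·g₂ = g₂⁻¹·g₁, g₃⁻¹·g₄ = g₄⁻¹·g₃, and g₄⁻¹·g₂ = g₃⁻¹·g₁. -/
/-- Transfer lemma: from `q⁻¹s = p⁻¹r` and `p x = r y` deduce `q x = s y`. -/
lemma wt4_transfer {G : Type*} [Group G] {p r q s x y : G}
    (t : q⁻¹ * s = p⁻¹ * r) (h : p * x = r * y) : q * x = s * y := by
  have hx : x = p⁻¹ * (r * y) := by rw [← h, inv_mul_cancel_left]
  rw [hx, ← mul_assoc p⁻¹ r y, ← t, mul_assoc q⁻¹ s y, mul_inv_cancel_left]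

lemma wt4_pair_inter_even {α : Type*} [DecidableEq α] {a b c d : α} (hab : a ≠ b)
    (h : (a = c ∨ a = d) ↔ (b = c ∨ b = d)) :
    (({a, b} : Finset α) ∩ {c, d}).card % 2 = 0 := by
  by_cases ha : a = c ∨ a = d
  · have hb := h.mp ha
    have he : ({a, b} : Finset α) ∩ {c, d} = {a, b} := by
      apply Finset.inter_eq_left.mpr
      intro x hx
      simp only [Finset.mem_insert, Finset.mem_singleton] at hx ⊢
      rcases hx with rfl | rfl <;> tauto
    rw [he, Finset.card_pair hab]
  · have hb : ¬(b = c ∨ b = d) := fun hb => ha (h.mpr hb)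
    have he : ({a, b} : Finset α) ∩ {c, d} = ∅ := by
      ext x
      simp only [Finset.mem_inter, Finset.mem_insert, Finset.mem_singleton,
        Finset.notMem_empty, iff_false, not_and]
      rintro (rfl | rfl) <;> tauto
    rw [he]; rfl

lemma wt4_pair_eq {α : Type*} [DecidableEq α] {s : Finset α} {a b : α} (hab : a ≠ b)
    (hs : s ⊆ {a, b}) (hne : a ∈ s) (hcard : s.card % 2 = 0) : s = {a, b} := by
  have h2 : s.card ≤ 2 := by
    have := Finset.card_le_card hs
    rwa [Finset.card_pair hab] at this
  have h1 : 1 ≤ s.card := Finset.card_pos.mpr ⟨a, hne⟩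
  have h3 : s.card = 2 := by omega
  exact Finset.eq_of_subset_of_card_le hs (by rw [h3, Finset.card_pair hab])

/-- For a weight-4 group algebra code with pre-orientation assignment
`δ_in(a) = {g₁·a, g₂·a}`, `δ_out(a) = {g₃·a, g₄·a}`, `δ_free(a) = ∅`, the
non-associative 3-copy-cup conditions hold iff `g₁⁻¹g₂ = g₂⁻¹g₁`,
`g₃⁻¹g₄ = g₄⁻¹g₃` and `g₄⁻¹g₂ = g₃⁻¹g₁`. -/
theorem weight4_assignment220_nonassociative_three_copy_cup_iff {G : Type*}
    [Group G] [DecidableEq G] (g₁ g₂ g₃ g₄ : G)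
    (h12 : g₁ ≠ g₂) (h13 : g₁ ≠ g₃) (h14 : g₁ ≠ g₄)
    (h23 : g₂ ≠ g₃) (h24 : g₂ ≠ g₄) (h34 : g₃ ≠ g₄) :
    ((∀ a₁ a₂ : G, a₁ ≠ a₂ →
        (({g₁ * a₁, g₂ * a₁} : Finset G) ∩ ({g₁ * a₂, g₂ * a₂} : Finset G)).card % 2 = 0) ∧
      (∀ a₁ a₂ : G, a₁ ≠ a₂ →
        (({g₃ * a₁, g₄ * a₁} : Finset G) ∩ ({g₃ * a₂, g₄ * a₂} : Finset G)).card % 2 = 0) ∧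
      (∀ a₁ a₂ a₃ : G, a₁ ≠ a₂ → a₁ ≠ a₃ → a₂ ≠ a₃ →
        (({g₃ * a₁, g₄ * a₁} : Finset G) ∩ ({g₃ * a₂, g₄ * a₂} : Finset G)
          ∩ ({g₁ * a₃, g₂ * a₃} : Finset G)).card % 2 = 0))
    ↔ (g₁⁻¹ * g₂ = g₂⁻¹ * g₁ ∧ g₃⁻¹ * g₄ = g₄⁻¹ * g₃ ∧ g₄⁻¹ * g₂ = g₃⁻¹ * g₁) := by
  constructor
  · rintro ⟨C1, C2, C3⟩
    have t₁ : g₁⁻¹ * g₂ = g₂⁻¹ * g₁ := by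
      have hne : (1 : G) ≠ g₁⁻¹ * g₂ := by
        intro h; apply h12; rw [eq_inv_mul_iff_mul_eq, mul_one] at h; exact h
      have hc := C1 1 (g₁⁻¹ * g₂) hne
      have hg2 : g₂ ∈ ({g₁ * 1, g₂ * 1} : Finset G) ∩ {g₁ * (g₁⁻¹ * g₂), g₂ * (g₁⁻¹ * g₂)} := by
        simp [mul_inv_cancel_left]
      have hsub : ({g₁ * 1, g₂ * 1} : Finset G) ∩ {g₁ * (g₁⁻¹ * g₂), g₂ * (g₁⁻¹ * g₂)}
          ⊆ {g₂, g₁} := by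
        intro x hx
        simp only [Finset.mem_inter, Finset.mem_insert, Finset.mem_singleton, mul_one] at hx
        simp only [Finset.mem_insert, Finset.mem_singleton]
        tauto
      have heq := wt4_pair_eq (Ne.symm h12) hsub hg2 hc
      have hg1 : g₁ ∈ ({g₁ * 1, g₂ * 1} : Finset G) ∩ {g₁ * (g₁⁻¹ * g₂), g₂ * (g₁⁻¹ * g₂)} := by
        rw [heq]; simp
      simp only [Finset.mem_inter, Finset.mem_insert, Finset.mem_singleton,
        mul_inv_cancel_left] at hg1
      rcases hg1.2 with h | h
      · exact absurd h h12
      · have := congrArg (fun z => g₂⁻¹ * z) h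
        simp only [inv_mul_cancel_left] at this
        exact this.symm
    have t₂ : g₃⁻¹ * g₄ = g₄⁻¹ * g₃ := by
      have hne : (1 : G) ≠ g₃⁻¹ * g₄ := by
        intro h; apply h34; rw [eq_inv_mul_iff_mul_eq, mul_one] at h; exact h
      have hc := C2 1 (g₃⁻¹ * g₄) hne
      have hg4 : g₄ ∈ ({g₃ * 1, g₄ * 1} : Finset G) ∩ {g₃ * (g₃⁻¹ * g₄), g₄ * (g₃⁻¹ * g₄)} := by
        simp [mul_inv_cancel_left]
      have hsub : ({g₃ * 1, g₄ * 1} : Finset G) ∩ {g₃ * (g₃⁻¹ * g₄), g₄ * (g₃⁻¹ * g₄)}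
          ⊆ {g₄, g₃} := by
        intro x hx
        simp only [Finset.mem_inter, Finset.mem_insert, Finset.mem_singleton, mul_one] at hx
        simp only [Finset.mem_insert, Finset.mem_singleton]
        tauto
      have heq := wt4_pair_eq h34.symm hsub hg4 hc
      have hg3 : g₃ ∈ ({g₃ * 1, g₄ * 1} : Finset G) ∩ {g₃ * (g₃⁻¹ * g₄), g₄ * (g₃⁻¹ * g₄)} := by
        rw [heq]; simp
      simp only [Finset.mem_inter, Finset.mem_insert, Finset.mem_singleton,
        mul_inv_cancel_left] at hg3
      rcases hg3.2 with h | h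
      · exact absurd h h34
      · have := congrArg (fun z => g₄⁻¹ * z) h
        simp only [inv_mul_cancel_left] at this
        exact this.symm
    refine ⟨t₁, t₂, ?_⟩
    -- t₃ from C3 with a₁ = 1, a₂ = g₄⁻¹g₃, a₃ = g₁⁻¹g₃
    have hne12 : (1 : G) ≠ g₄⁻¹ * g₃ := by
      intro h; apply h34; rw [eq_inv_mul_iff_mul_eq, mul_one] at h; exact h.symm
    have hne13 : (1 : G) ≠ g₁⁻¹ * g₃ := by
      intro h; apply h13; rw [eq_inv_mul_iff_mul_eq, mul_one] at h; exact h
    have hne23 : g₄⁻¹ * g₃ ≠ g₁⁻¹ * g₃ := fun h =>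
      h14 (inv_injective (mul_right_cancel h)).symm
    have hc := C3 1 (g₄⁻¹ * g₃) (g₁⁻¹ * g₃) hne12 hne13 hne23
    -- δout(a₂) = {g₃ * (g₄⁻¹g₃), g₃}, and g₃ * (g₄⁻¹g₃) = g₄ by t₂
    have e1 : g₃ * (g₄⁻¹ * g₃) = g₄ := by
      rw [← t₂, mul_inv_cancel_left]
    have e2 : g₄ * (g₄⁻¹ * g₃) = g₃ := by rw [mul_inv_cancel_left]
    have e3 : g₁ * (g₁⁻¹ * g₃) = g₃ := by rw [mul_inv_cancel_left]
    rw [e1, e2, e3, mul_one, mul_one] at hc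
    -- hc : (({g₃, g₄} ∩ {g₄, g₃}) ∩ {g₃, g₂ * (g₁⁻¹ * g₃)}).card % 2 = 0
    have e4 : ({g₃, g₄} : Finset G) ∩ {g₄, g₃} = {g₃, g₄} := by
      rw [Finset.pair_comm g₄ g₃, Finset.inter_self]
    rw [e4] at hc
    have hg3 : g₃ ∈ ({g₃, g₄} : Finset G) ∩ {g₃, g₂ * (g₁⁻¹ * g₃)} := by simp
    have hsub : ({g₃, g₄} : Finset G) ∩ {g₃, g₂ * (g₁⁻¹ * g₃)} ⊆ {g₃, g₄} :=
      Finset.inter_subset_left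
    have heq := wt4_pair_eq h34 hsub hg3 hc
    have hg4 : g₄ ∈ ({g₃, g₄} : Finset G) ∩ {g₃, g₂ * (g₁⁻¹ * g₃)} := by rw [heq]; simp
    simp only [Finset.mem_inter, Finset.mem_insert, Finset.mem_singleton] at hg4
    rcases hg4.2 with h | h
    · exact absurd h.symm h34
    · -- g₄ = g₂ * (g₁⁻¹ * g₃)  ⟹  g₄⁻¹ * g₂ = g₃⁻¹ * g₁
      rw [h]; group
  · rintro ⟨t₁, t₂, t₃⟩
    -- derived transfers
    have t₁' : g₂⁻¹ * g₁ = g₁⁻¹ * g₂ := t₁.symm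
    have t₂' : g₄⁻¹ * g₃ = g₃⁻¹ * g₄ := t₂.symm
    have t₃' : g₃⁻¹ * g₁ = g₄⁻¹ * g₂ := t₃.symm
    have t₄ : g₄⁻¹ * g₁ = g₃⁻¹ * g₂ := by
      calc g₄⁻¹ * g₁ = g₄⁻¹ * g₂ * (g₂⁻¹ * g₁) := by rw [mul_assoc, mul_inv_cancel_left]
        _ = g₃⁻¹ * g₁ * (g₁⁻¹ * g₂) := by rw [t₃, t₁]
        _ = g₃⁻¹ * g₂ := by rw [mul_assoc, mul_inv_cancel_left]
    have t₄' : g₃⁻¹ * g₂ = g₄⁻¹ * g₁ := t₄.symm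
    have mulne : ∀ (p q : G) (a₁ a₂ : G), p ≠ q → ¬ (p * a₁ = q * a₁) := by
      intro p q a₁ a₂ hpq h
      exact hpq (mul_right_cancel h)
    refine ⟨?_, ?_, ?_⟩
    · intro a₁ a₂ ha
      apply wt4_pair_inter_even (fun h => h12 (mul_right_cancel h))
      constructor
      · rintro (h | h)
        · exact absurd (mul_left_cancel h) ha
        · exact Or.inl (wt4_transfer t₁' h)
      · rintro (h | h)
        · exact Or.inr (wt4_transfer t₁ h)
        · exact absurd (mul_left_cancel h) ha
    · intro a₁ a₂ ha
      apply wt4_pair_inter_even (fun h => h34 (mul_right_cancel h))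
      constructor
      · rintro (h | h)
        · exact absurd (mul_left_cancel h) ha
        · exact Or.inl (wt4_transfer t₂' h)
      · rintro (h | h)
        · exact Or.inr (wt4_transfer t₂ h)
        · exact absurd (mul_left_cancel h) ha
    · intro a₁ a₂ a₃ h12' h13' h23'
      by_cases hcase : g₃ * a₁ = g₄ * a₂
      · -- δout(a₂) = δout(a₁)
        have h2 : g₄ * a₁ = g₃ * a₂ := wt4_transfer t₂' hcase
        have hset : ({g₃ * a₂, g₄ * a₂} : Finset G) = {g₃ * a₁, g₄ * a₁} := by
          rw [← h2, ← hcase, Finset.pair_comm]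
        rw [hset, Finset.inter_self]
        apply wt4_pair_inter_even (fun h => h34 (mul_right_cancel h))
        constructor
        · rintro (h | h)
          · exact Or.inr (wt4_transfer t₃ h)
          · exact Or.inl (wt4_transfer t₄ h)
        · rintro (h | h)
          · exact Or.inr (wt4_transfer t₄' h)
          · exact Or.inl (wt4_transfer t₃' h)
      · -- δout(a₁) ∩ δout(a₂) = ∅
        have hcase2 : ¬ (g₄ * a₁ = g₃ * a₂) := fun h => hcase (wt4_transfer t₂ h)
        have hempty : ({g₃ * a₁, g₄ * a₁} : Finset G) ∩ {g₃ * a₂, g₄ * a₂} = ∅ := by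
          ext x
          simp only [Finset.mem_inter, Finset.mem_insert, Finset.mem_singleton,
            Finset.notMem_empty, iff_false, not_and]
          rintro (rfl | rfl) (h | h)
          · exact h12' (mul_left_cancel h)
          · exact hcase h
          · exact hcase2 h
          · exact h12' (mul_left_cancel h)
        rw [hempty, Finset.empty_inter]
        rfl
end

section
/- Let G be a group and let g₁, g₂, g₃ ∈ G be pairwise distinct, and set S = {g₁, g₂, g₃}. Then there exist pairwise distinct a₁, a₂, a₃ ∈ G such that |(S·a₁) ∩ (S·a₂) ∩ (S·a₃)| is odd. Consequently, for a weight-4 group algebra code the assignment δ_in = {g₁, g₂, g₃}, δ_out = {g₄}, δ_free = ∅ cannot satisfy the non-associative 3-copy-cup gate condition that |δ_in(a₁) ∩ δ_in(a₂) ∩ δ_in(a₃)| be even for all pairwise distinct a₁, a₂, a₃. -/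
/-- For pairwise distinct `g₁, g₂, g₃` in a group, there exist pairwise distinct
`a₁, a₂, a₃` such that the triple intersection of the right translates of
`S = {g₁, g₂, g₃}` has odd cardinality; hence a weight-4 group algebra code with
assignment `δ_in = {g₁, g₂, g₃}` cannot satisfy the non-associative 3-copy-cup
gate condition. -/
theorem weight4_assignment310_triple_intersection_odd {G : Type*} [Group G] [DecidableEq G]
    (g₁ g₂ g₃ : G) (h12 : g₁ ≠ g₂) (h13 : g₁ ≠ g₃) (h23 : g₂ ≠ g₃) :
    ∃ a₁ a₂ a₃ : G, a₁ ≠ a₂ ∧ a₁ ≠ a₃ ∧ a₂ ≠ a₃ ∧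
      ((({g₁, g₂, g₃} : Finset G).image (· * a₁)
        ∩ ({g₁, g₂, g₃} : Finset G).image (· * a₂)
        ∩ ({g₁, g₂, g₃} : Finset G).image (· * a₃)).card) % 2 = 1 := by
  set S : Finset G := {g₁, g₂, g₃} with hS
  refine ⟨g₁⁻¹, g₂⁻¹, g₃⁻¹, by simpa using h12, by simpa using h13, by simpa using h23, ?_⟩
  set T := S.image (· * g₁⁻¹) ∩ S.image (· * g₂⁻¹) ∩ S.image (· * g₃⁻¹) with hT
  have memT : ∀ x : G, x ∈ T ↔ x * g₁ ∈ S ∧ x * g₂ ∈ S ∧ x * g₃ ∈ S := by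
    intro x
    simp only [hT, Finset.mem_inter, Finset.mem_image]
    constructor
    · rintro ⟨⟨⟨s₁, hs₁, h1⟩, s₂, hs₂, h2⟩, s₃, hs₃, h3⟩
      refine ⟨?_, ?_, ?_⟩
      · rw [← h1, inv_mul_cancel_right]; exact hs₁
      · rw [← h2, inv_mul_cancel_right]; exact hs₂
      · rw [← h3, inv_mul_cancel_right]; exact hs₃
    · rintro ⟨h1, h2, h3⟩
      exact ⟨⟨⟨_, h1, by group⟩, _, h2, by group⟩, _, h3, by group⟩
  -- key: an involution in T must be 1
  have key : ∀ x : G, x ∈ T → x * x = 1 → x = 1 := by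
    intro x hx hxx
    rw [memT] at hx
    obtain ⟨hx1, hx2, hx3⟩ := hx
    have mem1 : x * g₁ = g₁ ∨ x * g₁ = g₂ ∨ x * g₁ = g₃ := by
      simpa [hS] using hx1
    rcases mem1 with h | h | h
    · exact mul_right_cancel (by rw [h, one_mul])
    · -- x * g₁ = g₂, so x * g₂ = g₁
      have e2 : x * g₂ = g₁ := by
        rw [← h, ← mul_assoc, hxx, one_mul]
      have mem3 : x * g₃ = g₁ ∨ x * g₃ = g₂ ∨ x * g₃ = g₃ := by
        simpa [hS] using hx3
      rcases mem3 with h' | h' | h'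
      · exact absurd (mul_left_cancel (h'.trans e2.symm)) (Ne.symm h23)
      · exact absurd (mul_left_cancel (h'.trans h.symm)) (Ne.symm h13)
      · exact mul_right_cancel (by rw [h', one_mul])
    · -- x * g₁ = g₃, so x * g₃ = g₁
      have e3 : x * g₃ = g₁ := by
        rw [← h, ← mul_assoc, hxx, one_mul]
      have mem2 : x * g₂ = g₁ ∨ x * g₂ = g₂ ∨ x * g₂ = g₃ := by
        simpa [hS] using hx2
      rcases mem2 with h' | h' | h'
      · exact absurd (mul_left_cancel (h'.trans e3.symm)) h23
      · exact mul_right_cancel (by rw [h', one_mul])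
      · exact absurd (mul_left_cancel (h'.trans h.symm)) (Ne.symm h12)
  have hone : (1 : G) ∈ T := by
    rw [memT]
    refine ⟨?_, ?_, ?_⟩ <;> simp [hS]
  -- inverse-closure of T
  have hinv : ∀ x ∈ T, x⁻¹ ∈ T := by
    intro x hx
    have hmap : S.image (x * ·) = S := by
      apply Finset.eq_of_subset_of_card_le
      · intro y hy
        simp only [Finset.mem_image] at hy
        obtain ⟨s, hs, rfl⟩ := hy
        rw [memT] at hx
        have : s = g₁ ∨ s = g₂ ∨ s = g₃ := by simpa [hS] using hs
        rcases this with rfl | rfl | rfl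
        · exact hx.1
        · exact hx.2.1
        · exact hx.2.2
      · rw [Finset.card_image_of_injective _ (mul_right_injective x)]
    rw [memT]
    refine ⟨?_, ?_, ?_⟩
    all_goals
      first
      | (have hg : g₁ ∈ S.image (x * ·) := by rw [hmap]; simp [hS]
         obtain ⟨s, hs, hxs⟩ := Finset.mem_image.mp hg
         rw [← hxs, inv_mul_cancel_left]; exact hs)
      | (have hg : g₂ ∈ S.image (x * ·) := by rw [hmap]; simp [hS]
         obtain ⟨s, hs, hxs⟩ := Finset.mem_image.mp hg
         rw [← hxs, inv_mul_cancel_left]; exact hs)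
      | (have hg : g₃ ∈ S.image (x * ·) := by rw [hmap]; simp [hS]
         obtain ⟨s, hs, hxs⟩ := Finset.mem_image.mp hg
         rw [← hxs, inv_mul_cancel_left]; exact hs)
  -- cardinality bounds
  have hpos : 1 ≤ T.card := Finset.card_pos.mpr ⟨1, hone⟩
  have hle : T.card ≤ 3 := by
    calc T.card ≤ (S.image (· * g₁⁻¹)).card :=
          Finset.card_le_card (Finset.inter_subset_left.trans Finset.inter_subset_left)
      _ ≤ S.card := Finset.card_image_le
      _ ≤ 3 := by
          rw [hS]
          refine (Finset.card_insert_le _ _).trans ?_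
          refine Nat.succ_le_succ ?_
          refine (Finset.card_insert_le _ _).trans ?_
          simp
  have hne2 : T.card ≠ 2 := by
    intro h2
    obtain ⟨a, b, hab, habT⟩ := Finset.card_eq_two.mp h2
    have h1mem : (1 : G) = a ∨ (1 : G) = b := by
      have := hone
      rw [habT] at this
      simpa using this
    rcases h1mem with rfl | rfl
    · -- a = 1, so b ≠ 1 and b ∈ T
      have hbT : b ∈ T := by rw [habT]; simp
      have hbinv : b⁻¹ ∈ T := hinv b hbT
      rw [habT] at hbinv
      simp only [Finset.mem_insert, Finset.mem_singleton] at hbinv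
      rcases hbinv with h | h
      · exact hab (by rw [← inv_inv b, h, inv_one])
      · have : b * b = 1 := by nth_rewrite 1 [← h]; exact inv_mul_cancel b
        exact hab ((key b hbT this).symm)
    · have haT : a ∈ T := by rw [habT]; simp
      have hainv : a⁻¹ ∈ T := hinv a haT
      rw [habT] at hainv
      simp only [Finset.mem_insert, Finset.mem_singleton] at hainv
      rcases hainv with h | h
      · have : a * a = 1 := by nth_rewrite 1 [← h]; exact inv_mul_cancel a
        exact hab (key a haT this)
      · exact hab (by rw [← inv_inv a, h, inv_one])
  omega
end

section
/- Let G be a group and let g₁, g₂, g₃, g₄ ∈ G be pairwise distinct. Consider the weight-4 group algebra code with pre-orientation assignment δ_in(a) = {g₁·a, g₂·a}, δ_out(a) = {g₃·a, g₄·a}, δ_free(a) = ∅. Then the symmetric 3-copy-cup conditions — namely (i) for all a₁ ≠ a₂ in G, |({g₁·a₁, g₂·a₁}) ∩ ({g₁·a₂, g₂·a₂})| + |({g₃·a₁, g₄·a₁}) ∩ ({g₃·a₂, g₄·a₂})| ≡ 0 (mod 2), and (ii) for all pairwise distinct a₁, a₂, a₃, |({g₁·a₁, g₂·a₁}) ∩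 ({g₁·a₂, g₂·a₂}) ∩ ({g₁·a₃, g₂·a₃})| + |({g₃·a₁, g₄·a₁}) ∩ ({g₃·a₂, g₄·a₂}) ∩ ({g₃·a₃, g₄·a₃})| ≡ 0 (mod 2) — hold if and only if (g₁⁻¹·g₂ = g₂⁻¹·g₁ and g₃⁻¹·g₄ = g₄⁻¹·g₃), or g₁⁻¹·g₂ = g₃⁻¹·g₄, or g₁⁻¹·g₂ = g₄⁻¹·g₃. Moreover, condition (ii) is automatically satisfied: each triple intersection is empty for pairwise distinct a₁, a₂, a₃. -/
lemma flip_eq {G : Type*} [Group G] (x y u v : G) :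
    x⁻¹ * y = u⁻¹ * v ↔ y⁻¹ * x = v⁻¹ * u := by
  constructor <;> intro h <;>
    simpa [mul_inv_rev] using congrArg (·⁻¹) h

lemma triple_empty {G : Type*} [Group G] [DecidableEq G] (g h a b c : G)
    (hab : a ≠ b) (hac : a ≠ c) (hbc : b ≠ c) :
    ({g*a, h*a} : Finset G) ∩ ({g*b, h*b} : Finset G) ∩ ({g*c, h*c} : Finset G) = ∅ := by
  rw [Finset.eq_empty_iff_forall_notMem]
  intro x hx
  simp only [Finset.mem_inter, Finset.mem_insert, Finset.mem_singleton] at hx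
  obtain ⟨⟨h1 | h1, h2 | h2⟩, h3 | h3⟩ := hx <;>
    first
      | exact hab (mul_left_cancel (h1.symm.trans h2))
      | exact hac (mul_left_cancel (h1.symm.trans h3))
      | exact hbc (mul_left_cancel (h2.symm.trans h3))

lemma pair_inter_card {G : Type*} [Group G] [DecidableEq G]
    (g h : G) (hgh : g ≠ h) (a b : G) (hab : a ≠ b) :
    (({g*a, h*a} : Finset G) ∩ ({g*b, h*b} : Finset G)).card
      = (if b = (h⁻¹*g)*a then 1 else 0) + (if b = (g⁻¹*h)*a then 1 else 0) := by
  have e1 : b = (h⁻¹*g)*a ↔ g*a = h*b := by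
    rw [mul_assoc, eq_inv_mul_iff_mul_eq, eq_comm]
  have e2 : b = (g⁻¹*h)*a ↔ h*a = g*b := by
    rw [mul_assoc, eq_inv_mul_iff_mul_eq, eq_comm]
  have d1 : g*a ≠ h*a := fun hh => hgh (mul_right_cancel hh)
  have d2 : g*a ≠ g*b := fun hh => hab (mul_left_cancel hh)
  have d3 : h*a ≠ h*b := fun hh => hab (mul_left_cancel hh)
  have d4 : g*b ≠ h*b := fun hh => hgh (mul_right_cancel hh)
  simp only [e1, e2]
  by_cases c1 : g*a = h*b <;> by_cases c2 : h*a = g*b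
  · have : ({g*b, h*b} : Finset G) = {g*a, h*a} := by
      rw [← c1, ← c2, Finset.pair_comm]
    rw [this, Finset.inter_self, if_pos c1, if_pos c2, Finset.card_pair d1]
  · have : ({g*a, h*a} : Finset G) ∩ ({g*b, h*b} : Finset G) = {g*a} := by
      ext z
      simp only [Finset.mem_inter, Finset.mem_insert, Finset.mem_singleton]
      constructor
      · rintro ⟨hz1 | hz1, hz2 | hz2⟩ <;> subst hz1 <;> first
          | rfl
          | exact absurd hz2 d2
          | exact absurd hz2 c2
          | exact absurd hz2 d3
      · rintro rfl; exact ⟨Or.inl rfl, Or.inr c1⟩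
    rw [this, if_pos c1, if_neg c2]; simp
  · have : ({g*a, h*a} : Finset G) ∩ ({g*b, h*b} : Finset G) = {h*a} := by
      ext z
      simp only [Finset.mem_inter, Finset.mem_insert, Finset.mem_singleton]
      constructor
      · rintro ⟨hz1 | hz1, hz2 | hz2⟩ <;> subst hz1 <;> first
          | rfl
          | exact absurd hz2 d2
          | exact absurd hz2 c1
          | exact absurd hz2 d3
      · rintro rfl; exact ⟨Or.inr rfl, Or.inl c2⟩
    rw [this, if_neg c1, if_pos c2]; simp
  · have : ({g*a, h*a} : Finset G) ∩ ({g*b, h*b} : Finset G) = ∅ := by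
      ext z
      simp only [Finset.mem_inter, Finset.mem_insert, Finset.mem_singleton,
        Finset.notMem_empty, iff_false, not_and]
      rintro (hz1 | hz1) <;> subst hz1 <;> rintro (hz2 | hz2) <;>
        first
          | exact d2 hz2
          | exact c1 hz2
          | exact c2 hz2
          | exact d3 hz2
    rw [this, if_neg c1, if_neg c2]; simp


/-- For a weight-4 group algebra code with pre-orientation assignment
`δ_in(a) = {g₁·a, g₂·a}`, `δ_out(a) = {g₃·a, g₄·a}`, `δ_free(a) = ∅`, the symmetric
3-copy-cup conditions hold iff one of the three listed group-identity conditions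
holds; moreover, the triple-intersection condition is automatically satisfied, as
each triple intersection is empty for pairwise distinct `a₁, a₂, a₃`. -/
theorem weight4_assignment220_symmetric_three_copy_cup_iff {G : Type*}
    [Group G] [DecidableEq G] (g₁ g₂ g₃ g₄ : G)
    (h12 : g₁ ≠ g₂) (h13 : g₁ ≠ g₃) (h14 : g₁ ≠ g₄)
    (h23 : g₂ ≠ g₃) (h24 : g₂ ≠ g₄) (h34 : g₃ ≠ g₄) :
    (((∀ a₁ a₂ : G, a₁ ≠ a₂ →
          ((({g₁ * a₁, g₂ * a₁} : Finset G) ∩ ({g₁ * a₂, g₂ * a₂} : Finset G)).card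
            + (({g₃ * a₁, g₄ * a₁} : Finset G) ∩ ({g₃ * a₂, g₄ * a₂} : Finset G)).card) % 2 = 0) ∧
        (∀ a₁ a₂ a₃ : G, a₁ ≠ a₂ → a₁ ≠ a₃ → a₂ ≠ a₃ →
          ((({g₁ * a₁, g₂ * a₁} : Finset G) ∩ ({g₁ * a₂, g₂ * a₂} : Finset G)
              ∩ ({g₁ * a₃, g₂ * a₃} : Finset G)).card
            + (({g₃ * a₁, g₄ * a₁} : Finset G) ∩ ({g₃ * a₂, g₄ * a₂} : Finset G)
              ∩ ({g₃ * a₃, g₄ * a₃} : Finset G)).card) % 2 = 0))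
      ↔ ((g₁⁻¹ * g₂ = g₂⁻¹ * g₁ ∧ g₃⁻¹ * g₄ = g₄⁻¹ * g₃) ∨
          g₁⁻¹ * g₂ = g₃⁻¹ * g₄ ∨ g₁⁻¹ * g₂ = g₄⁻¹ * g₃))
    ∧ (∀ a₁ a₂ a₃ : G, a₁ ≠ a₂ → a₁ ≠ a₃ → a₂ ≠ a₃ →
        ({g₁ * a₁, g₂ * a₁} : Finset G) ∩ ({g₁ * a₂, g₂ * a₂} : Finset G)
          ∩ ({g₁ * a₃, g₂ * a₃} : Finset G) = ∅ ∧
        ({g₃ * a₁, g₄ * a₁} : Finset G) ∩ ({g₃ * a₂, g₄ * a₂} : Finset G)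
          ∩ ({g₃ * a₃, g₄ * a₃} : Finset G) = ∅) := by
  refine ⟨?_, fun a₁ a₂ a₃ hA hB hC =>
    ⟨triple_empty g₁ g₂ a₁ a₂ a₃ hA hB hC, triple_empty g₃ g₄ a₁ a₂ a₃ hA hB hC⟩⟩
  constructor
  · rintro ⟨hpair, -⟩
    have hne1 : (1 : G) ≠ g₂⁻¹ * g₁ :=
      fun hh => h12 (inv_mul_eq_one.mp hh.symm).symm
    have hne2 : (1 : G) ≠ g₄⁻¹ * g₃ :=
      fun hh => h34 (inv_mul_eq_one.mp hh.symm).symm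
    have H1 := hpair 1 (g₂⁻¹ * g₁) hne1
    have H2 := hpair 1 (g₄⁻¹ * g₃) hne2
    rw [pair_inter_card g₁ g₂ h12 _ _ hne1, pair_inter_card g₃ g₄ h34 _ _ hne1] at H1
    rw [pair_inter_card g₁ g₂ h12 _ _ hne2, pair_inter_card g₃ g₄ h34 _ _ hne2] at H2
    simp only [mul_one, if_true] at H1 H2
    have K1 : g₁⁻¹ * g₂ = g₂⁻¹ * g₁ ∨ g₁⁻¹ * g₂ = g₃ ⁻¹ * g₄ ∨ g₁⁻¹ * g₂ = g₄⁻¹ * g₃ := by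
      by_contra hcon
      push_neg at hcon
      obtain ⟨nA, nC, nD⟩ := hcon
      rw [if_neg (fun hh : g₂⁻¹ * g₁ = g₁⁻¹ * g₂ => nA hh.symm),
        if_neg (fun hh : g₂⁻¹ * g₁ = g₄⁻¹ * g₃ => nC ((flip_eq _ _ _ _).mp hh)),
        if_neg (fun hh : g₂⁻¹ * g₁ = g₃⁻¹ * g₄ => nD ((flip_eq _ _ _ _).mp hh))] at H1
      omega
    have K2 : g₃⁻¹ * g₄ = g₄⁻¹ * g₃ ∨ g₁⁻¹ * g₂ = g₃ ⁻¹ * g₄ ∨ g₁⁻¹ * g₂ = g₄⁻¹ * g₃ := by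
      by_contra hcon
      push_neg at hcon
      obtain ⟨nB, nC, nD⟩ := hcon
      rw [if_neg (fun hh : g₄⁻¹ * g₃ = g₂⁻¹ * g₁ => nC ((flip_eq _ _ _ _).mp hh).symm),
        if_neg (fun hh : g₄⁻¹ * g₃ = g₁⁻¹ * g₂ => nD hh.symm),
        if_neg (fun hh : g₄⁻¹ * g₃ = g₃⁻¹ * g₄ => nB hh.symm)] at H2
      omega
    tauto
  · rintro hcase
    refine ⟨fun a₁ a₂ hne => ?_, fun a₁ a₂ a₃ hA hB hC => by
      rw [triple_empty g₁ g₂ a₁ a₂ a₃ hA hB hC, triple_empty g₃ g₄ a₁ a₂ a₃ hA hB hC]; simp⟩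
    rw [pair_inter_card g₁ g₂ h12 _ _ hne, pair_inter_card g₃ g₄ h34 _ _ hne]
    rcases hcase with ⟨hA, hB⟩ | hC | hD
    · rw [hA, hB]; split_ifs <;> omega
    · have hC' : g₂⁻¹ * g₁ = g₄⁻¹ * g₃ := (flip_eq _ _ _ _).mp hC
      rw [hC, hC']; split_ifs <;> omega
    · have hD' : g₂⁻¹ * g₁ = g₃⁻¹ * g₄ := (flip_eq _ _ _ _).mp hD
      rw [hD, hD']; split_ifs <;> omega
end

section
/- Let G be a commutative group and let g₁, g₂, g₃, g₄ ∈ G be pairwise distinct with g₁⁻¹·g₂ = g₂⁻¹·g₁, g₃⁻¹·g₄ = g₄⁻¹·g₃ and g₄⁻¹·g₂ = g₃⁻¹·g₁ (the pre-orientation conditions for the non-associative 3-copy-cup gate). Then in the group algebra 𝔽₂[G] = MonoidAlgebra (ZMod 2) G, the element c = [1] + [g₁⁻¹·g₂] (the sum of the basis elements indexed by the identity and by g₁⁻¹·g₂) is nonzero, its support has cardinality 2, and ([g₁] + [g₂] + [g₃] + [g₄]) · c = 0. In particular, the group algebra code with check element g₁ + g₂ + g₃ + g₄ has a nonzero codeword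 of Hamming weight 2, so its distance is at most 2. -/
/-- Under the non-associative 3-copy-cup pre-orientation conditions for a weight-4
abelian group algebra code, the element `1 + [g₁⁻¹g₂]` of `𝔽₂[G]` is a nonzero
codeword of Hamming weight 2 for the check element `g₁ + g₂ + g₃ + g₄`; hence the
code distance is at most 2. -/
theorem weight4_nonassociative_distance_le_two {G : Type*} [CommGroup G]
    (g₁ g₂ g₃ g₄ : G)
    (h12 : g₁ ≠ g₂) (h13 : g₁ ≠ g₃) (h14 : g₁ ≠ g₄)
    (h23 : g₂ ≠ g₃) (h24 : g₂ ≠ g₄) (h34 : g₃ ≠ g₄)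
    (hinv1 : g₁⁻¹ * g₂ = g₂⁻¹ * g₁)
    (hinv2 : g₃⁻¹ * g₄ = g₄⁻¹ * g₃)
    (hcond : g₄⁻¹ * g₂ = g₃⁻¹ * g₁) :
    (MonoidAlgebra.of (ZMod 2) G 1 + MonoidAlgebra.of (ZMod 2) G (g₁⁻¹ * g₂)) ≠ 0 ∧
    (Finsupp.support
      (MonoidAlgebra.of (ZMod 2) G 1 + MonoidAlgebra.of (ZMod 2) G (g₁⁻¹ * g₂)).coeff).card = 2 ∧
    (MonoidAlgebra.of (ZMod 2) G g₁ + MonoidAlgebra.of (ZMod 2) G g₂ +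
        MonoidAlgebra.of (ZMod 2) G g₃ + MonoidAlgebra.of (ZMod 2) G g₄) *
      (MonoidAlgebra.of (ZMod 2) G 1 + MonoidAlgebra.of (ZMod 2) G (g₁⁻¹ * g₂)) = 0 := by
  classical
  have hne : (1 : G) ≠ g₁⁻¹ * g₂ := by
    intro h
    exact h12 (by
      have := congrArg (fun x => g₁ * x) h
      simpa using this)
  have hsupp : (Finsupp.support
      (MonoidAlgebra.of (ZMod 2) G 1 + MonoidAlgebra.of (ZMod 2) G (g₁⁻¹ * g₂)).coeff) =
      {1, g₁⁻¹ * g₂} := by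
    simp only [MonoidAlgebra.of_apply, MonoidAlgebra.coeff_add, MonoidAlgebra.coeff_single]
    rw [Finsupp.support_add_eq]
    · rw [Finsupp.support_single_ne_zero _ one_ne_zero,
        Finsupp.support_single_ne_zero _ one_ne_zero]
      rw [← Finset.insert_eq]
    · rw [Finsupp.support_single_ne_zero _ one_ne_zero,
        Finsupp.support_single_ne_zero _ one_ne_zero]
      simpa using hne
  refine ⟨?_, ?_, ?_⟩
  · intro h
    have : (Finsupp.support
        (MonoidAlgebra.of (ZMod 2) G 1 + MonoidAlgebra.of (ZMod 2) G (g₁⁻¹ * g₂)).coeff) = ∅ := by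
      rw [h]; rfl
    rw [hsupp] at this
    simp at this
  · rw [hsupp]
    rw [Finset.card_insert_of_notMem (by simpa using hne), Finset.card_singleton]
  · have h2 : g₂ = g₄ * (g₃⁻¹ * g₁) := by
      rw [← hcond]; group
    have hh : g₁⁻¹ * g₂ = g₄ * g₃⁻¹ := by
      rw [h2]
      calc g₁⁻¹ * (g₄ * (g₃⁻¹ * g₁)) = g₁⁻¹ * g₁ * (g₄ * g₃⁻¹) := by ac_rfl
        _ = g₄ * g₃⁻¹ := by group
    have h3 : g₄ * g₄ = g₃ * g₃ := by
      calc g₄ * g₄ = g₄ * g₃ * (g₃⁻¹ * g₄) := by group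
        _ = g₄ * g₃ * (g₄⁻¹ * g₃) := by rw [hinv2]
        _ = g₃ * g₃ * (g₄ * g₄⁻¹) := by ac_rfl
        _ = g₃ * g₃ := by group
    have e1 : g₁ * (g₁⁻¹ * g₂) = g₂ := by group
    have e2 : g₂ * (g₁⁻¹ * g₂) = g₁ := by
      rw [hinv1]; group
    have e3 : g₃ * (g₁⁻¹ * g₂) = g₄ := by
      rw [hh]
      calc g₃ * (g₄ * g₃⁻¹) = g₃ * g₃⁻¹ * g₄ := by ac_rfl
        _ = g₄ := by group
    have e4 : g₄ * (g₁⁻¹ * g₂) = g₃ := by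
      rw [hh, ← mul_assoc, h3]
      group
    simp only [MonoidAlgebra.of_apply]
    rw [add_mul, add_mul, add_mul, mul_add, mul_add, mul_add, mul_add]
    simp only [MonoidAlgebra.single_mul_single, one_mul, mul_one, e1, e2, e3, e4]
    have pair : ∀ a : G, MonoidAlgebra.single a (1 : ZMod 2) + MonoidAlgebra.single a 1 = 0 := by
      intro a
      rw [← MonoidAlgebra.single_add, show ((1 : ZMod 2) + 1) = 0 by decide]
      simp [MonoidAlgebra.single]
    linear_combination (pair g₁) + (pair g₂) + (pair g₃) + (pair g₄)
end

section
/- Let G be a commutative group and let g₁, g₂, g₃, g₄, g₅, g₆ ∈ G be pairwise distinct with g₁⁻¹·g₂ = g₂⁻¹·g₁, g₃⁻¹·g₄ = g₄⁻¹·g₃, g₅⁻¹·g₆ = g₆⁻¹·g₅, and g₁·g₂⁻¹ = g₃·g₄⁻¹ = g₅·g₆⁻¹ (the pre-orientation conditions of the (2,2,2) assignment for the non-associative 3-copy-cup gate on a weight-6 group algebra code). Then in the group algebra 𝔽₂[G] = MonoidAlgebra (ZMod 2) G, the element c = [1] + [g₁⁻¹·g₂] is nonzero, its support has cardinality 2,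 and ([g₁] + [g₂] + [g₃] + [g₄] + [g₅] + [g₆]) · c = 0; indeed the check element factors as [g₁]·([1] + [g₁⁻¹·g₂])·([1] + [g₁⁻¹·g₃] + [g₁⁻¹·g₅]). In particular, the group algebra code with check element g₁ + g₂ + g₃ + g₄ + g₅ + g₆ has a nonzero codeword of Hamming weight 2, so its distance is at most 2. -/
/-- Under the (2,2,2)-assignment pre-orientation conditions of the non-associative
3-copy-cup gate for a weight-6 abelian group algebra code, the element
`1 + [g₁⁻¹g₂]` of `𝔽₂[G]` is a nonzero codeword of Hamming weight 2 for the check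
element `g₁ + g₂ + g₃ + g₄ + g₅ + g₆`, and the check element factors as
`[g₁]·(1 + [g₁⁻¹g₂])·(1 + [g₁⁻¹g₃] + [g₁⁻¹g₅])`; hence the code distance is at
most 2. -/
theorem weight6_nonassociative_distance_le_two {G : Type*} [CommGroup G]
    (g₁ g₂ g₃ g₄ g₅ g₆ : G)
    (h12 : g₁ ≠ g₂) (h13 : g₁ ≠ g₃) (h14 : g₁ ≠ g₄) (h15 : g₁ ≠ g₅) (h16 : g₁ ≠ g₆)
    (h23 : g₂ ≠ g₃) (h24 : g₂ ≠ g₄) (h25 : g₂ ≠ g₅) (h26 : g₂ ≠ g₆)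
    (h34 : g₃ ≠ g₄) (h35 : g₃ ≠ g₅) (h36 : g₃ ≠ g₆)
    (h45 : g₄ ≠ g₅) (h46 : g₄ ≠ g₆) (h56 : g₅ ≠ g₆)
    (hinv1 : g₁⁻¹ * g₂ = g₂⁻¹ * g₁)
    (hinv2 : g₃⁻¹ * g₄ = g₄⁻¹ * g₃)
    (hinv3 : g₅⁻¹ * g₆ = g₆⁻¹ * g₅)
    (hcond1 : g₁ * g₂⁻¹ = g₃ * g₄⁻¹)
    (hcond2 : g₃ * g₄⁻¹ = g₅ * g₆⁻¹) :
    (MonoidAlgebra.of (ZMod 2) G 1 + MonoidAlgebra.of (ZMod 2) G (g₁⁻¹ * g₂)) ≠ 0 ∧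
    (Finsupp.support
      (MonoidAlgebra.of (ZMod 2) G 1 + MonoidAlgebra.of (ZMod 2) G (g₁⁻¹ * g₂)).coeff).card = 2 ∧
    (MonoidAlgebra.of (ZMod 2) G g₁ + MonoidAlgebra.of (ZMod 2) G g₂ +
        MonoidAlgebra.of (ZMod 2) G g₃ + MonoidAlgebra.of (ZMod 2) G g₄ +
        MonoidAlgebra.of (ZMod 2) G g₅ + MonoidAlgebra.of (ZMod 2) G g₆) *
      (MonoidAlgebra.of (ZMod 2) G 1 + MonoidAlgebra.of (ZMod 2) G (g₁⁻¹ * g₂)) = 0 ∧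
    (MonoidAlgebra.of (ZMod 2) G g₁ + MonoidAlgebra.of (ZMod 2) G g₂ +
        MonoidAlgebra.of (ZMod 2) G g₃ + MonoidAlgebra.of (ZMod 2) G g₄ +
        MonoidAlgebra.of (ZMod 2) G g₅ + MonoidAlgebra.of (ZMod 2) G g₆)
      = MonoidAlgebra.of (ZMod 2) G g₁ *
          (MonoidAlgebra.of (ZMod 2) G 1 + MonoidAlgebra.of (ZMod 2) G (g₁⁻¹ * g₂)) *
          (MonoidAlgebra.of (ZMod 2) G 1 + MonoidAlgebra.of (ZMod 2) G (g₁⁻¹ * g₃) +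
            MonoidAlgebra.of (ZMod 2) G (g₁⁻¹ * g₅)) := by

  classical
  set e : G →* MonoidAlgebra (ZMod 2) G := MonoidAlgebra.of (ZMod 2) G with he
  have hane : g₁⁻¹ * g₂ ≠ 1 := fun h => h12 (inv_mul_eq_one.mp h)
  have ha2 : (g₁⁻¹ * g₂) * (g₁⁻¹ * g₂) = 1 := by
    nth_rewrite 2 [hinv1]; group
  have hg4 : g₄ = g₂ * g₁⁻¹ * g₃ := by
    rw [show g₂ * g₁⁻¹ = (g₁ * g₂⁻¹)⁻¹ by group, hcond1]; group
  have hg6 : g₆ = g₂ * g₁⁻¹ * g₅ := by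
    rw [show g₂ * g₁⁻¹ = (g₁ * g₂⁻¹)⁻¹ by group, hcond1, hcond2]; group
  have part1 : (e 1 + e (g₁⁻¹ * g₂)) ≠ 0 := by
    intro h
    have h1 : (e 1 + e (g₁⁻¹ * g₂)).coeff 1 = 1 := by
      rw [he]
      simp only [MonoidAlgebra.of_apply]
      rw [MonoidAlgebra.coeff_add, MonoidAlgebra.coeff_single, MonoidAlgebra.coeff_single,
        Finsupp.add_apply, Finsupp.single_apply, Finsupp.single_apply]
      simp [hane]
    rw [h] at h1
    simp at h1
  have part2 : (Finsupp.support (e 1 + e (g₁⁻¹ * g₂)).coeff).card = 2 := by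
    rw [he]
    simp only [MonoidAlgebra.of_apply]
    rw [MonoidAlgebra.coeff_add, MonoidAlgebra.coeff_single, MonoidAlgebra.coeff_single,
      Finsupp.support_add_eq]
    · rw [Finsupp.support_single_ne_zero _ one_ne_zero,
        Finsupp.support_single_ne_zero _ one_ne_zero,
        Finset.card_union_of_disjoint (by simp [hane, hane.symm])]
      simp
    · rw [Finsupp.support_single_ne_zero _ one_ne_zero,
        Finsupp.support_single_ne_zero _ one_ne_zero]
      simp [hane, hane.symm]
  have h2 : ∀ x : MonoidAlgebra (ZMod 2) G, x + x = 0 := fun x => by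
    rw [← two_smul (ZMod 2) x, show (2 : ZMod 2) = 0 by decide, zero_smul]
  have hcc : (e 1 + e (g₁⁻¹ * g₂)) * (e 1 + e (g₁⁻¹ * g₂)) = 0 := by
    simp only [mul_add, add_mul, ← map_mul, ha2, one_mul, mul_one]
    linear_combination h2 (e 1 + e (g₁⁻¹ * g₂))
  have part4 :
      e g₁ + e g₂ + e g₃ + e g₄ + e g₅ + e g₆
        = e g₁ * (e 1 + e (g₁⁻¹ * g₂)) * (e 1 + e (g₁⁻¹ * g₃) + e (g₁⁻¹ * g₅)) := by
    simp only [mul_add, add_mul, ← map_mul]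
    rw [show g₁ * (g₁⁻¹ * g₂) * (g₁⁻¹ * g₃) = g₂ * g₁⁻¹ * g₃ by group,
        show g₁ * (g₁⁻¹ * g₂) * (g₁⁻¹ * g₅) = g₂ * g₁⁻¹ * g₅ by group, ← hg4, ← hg6]
    simp only [mul_one, inv_mul_cancel_left, mul_inv_cancel_left]
    ring
  have part3 :
      (e g₁ + e g₂ + e g₃ + e g₄ + e g₅ + e g₆) * (e 1 + e (g₁⁻¹ * g₂)) = 0 := by
    rw [part4,
      show e g₁ * (e 1 + e (g₁⁻¹ * g₂)) * (e 1 + e (g₁⁻¹ * g₃) + e (g₁⁻¹ * g₅)) *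
          (e 1 + e (g₁⁻¹ * g₂))
        = e g₁ * (e 1 + e (g₁⁻¹ * g₃) + e (g₁⁻¹ * g₅)) *
          ((e 1 + e (g₁⁻¹ * g₂)) * (e 1 + e (g₁⁻¹ * g₂))) by ring,
      hcc, mul_zero]
  exact ⟨part1, part2, part3, part4⟩
end
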